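/- arXiv:0709.2687 — 7 statements merged into one kernel-verified Lean document; each statement's English description precedes it below -/
import Mathlib

section
/- Let V be a real inner product space, C ⊆ V a cone, and L : V → ℝ linear with L(f) < 0 for some f ∈ C. If Φ₁, Φ₂ ∈ C both minimise W(f) = L(f)/‖f‖ over nonzero elements of C, and C is closed under addition, then Φ₁ and Φ₂ are positive scalar multiples of each other. -/
theorem minimiser_unique_up_to_scaling
    {V : Type*} [NormedAddCommGroup V] [InnerProductSpace ℝ V]
    (C : Set V)
    (hcone : ∀ f ∈ C, ∀ c : ℝ, 0 ≤ c → c • f ∈ C)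
    (hadd : ∀ f ∈ C, ∀ g ∈ C, f + g ∈ C)
    (L : V →ₗ[ℝ] ℝ)
    (hdestab : ∃ f ∈ C, L f < 0)
    (Φ₁ Φ₂ : V) (h₁C : Φ₁ ∈ C) (h₂C : Φ₂ ∈ C) (h₁0 : Φ₁ ≠ 0) (h₂0 : Φ₂ ≠ 0)
    (h₁min : ∀ f ∈ C, f ≠ 0 → L Φ₁ / ‖Φ₁‖ ≤ L f / ‖f‖)
    (h₂min : ∀ f ∈ C, f ≠ 0 → L Φ₂ / ‖Φ₂‖ ≤ L f / ‖f‖) :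
    ∃ c : ℝ, 0 < c ∧ Φ₂ = c • Φ₁ := by
  have hn₁ : (0:ℝ) < ‖Φ₁‖ := norm_pos_iff.mpr h₁0
  have hn₂ : (0:ℝ) < ‖Φ₂‖ := norm_pos_iff.mpr h₂0
  set m : ℝ := L Φ₁ / ‖Φ₁‖ with hm
  have hmeq : L Φ₂ / ‖Φ₂‖ = m := le_antisymm (h₂min Φ₁ h₁C h₁0) (h₁min Φ₂ h₂C h₂0)
  have hmneg : m < 0 := by
    obtain ⟨f, hfC, hfL⟩ := hdestab
    have hf0 : f ≠ 0 := by rintro rfl; simp at hfL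
    have := h₁min f hfC hf0
    exact lt_of_le_of_lt this (div_neg_of_neg_of_pos hfL (norm_pos_iff.mpr hf0))
  set Ψ₁ : V := ‖Φ₁‖⁻¹ • Φ₁ with hΨ₁
  set Ψ₂ : V := ‖Φ₂‖⁻¹ • Φ₂ with hΨ₂
  have hΨ₁C : Ψ₁ ∈ C := hcone Φ₁ h₁C _ (by positivity)
  have hΨ₂C : Ψ₂ ∈ C := hcone Φ₂ h₂C _ (by positivity)
  have hnΨ₁ : ‖Ψ₁‖ = 1 := by
    rw [hΨ₁, norm_smul, norm_inv, norm_norm, inv_mul_cancel₀ hn₁.ne']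
  have hnΨ₂ : ‖Ψ₂‖ = 1 := by
    rw [hΨ₂, norm_smul, norm_inv, norm_norm, inv_mul_cancel₀ hn₂.ne']
  have hLΨ₁ : L Ψ₁ = m := by
    rw [hΨ₁, map_smul, smul_eq_mul, hm, div_eq_inv_mul]
  have hLΨ₂ : L Ψ₂ = m := by
    rw [hΨ₂, map_smul, smul_eq_mul, ← hmeq, div_eq_inv_mul]
  have hsumC : Ψ₁ + Ψ₂ ∈ C := hadd _ hΨ₁C _ hΨ₂C
  have hLsum : L (Ψ₁ + Ψ₂) = 2 * m := by rw [map_add, hLΨ₁, hLΨ₂]; ring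
  have hsum0 : Ψ₁ + Ψ₂ ≠ 0 := by
    intro h
    rw [h, map_zero] at hLsum
    nlinarith
  have hkey : m ≤ 2 * m / ‖Ψ₁ + Ψ₂‖ := by
    have := h₁min _ hsumC hsum0
    rwa [hLsum] at this
  have hnsum : (0:ℝ) < ‖Ψ₁ + Ψ₂‖ := norm_pos_iff.mpr hsum0
  have hge2 : 2 ≤ ‖Ψ₁ + Ψ₂‖ := by
    by_contra h
    push_neg at h
    have hlt : 2 * m / ‖Ψ₁ + Ψ₂‖ < m := by
      rw [div_lt_iff₀ hnsum]; nlinarith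
    linarith
  have hle2 : ‖Ψ₁ + Ψ₂‖ ≤ 2 := by
    calc ‖Ψ₁ + Ψ₂‖ ≤ ‖Ψ₁‖ + ‖Ψ₂‖ := norm_add_le _ _
      _ = 2 := by rw [hnΨ₁, hnΨ₂]; norm_num
  have heq : ‖Ψ₁ + Ψ₂‖ = ‖Ψ₁‖ + ‖Ψ₂‖ := by rw [hnΨ₁, hnΨ₂]; linarith
  have hray : SameRay ℝ Ψ₁ Ψ₂ := by
    rw [sameRay_iff_norm_add]; exact heq
  have hΨ₁0 : Ψ₁ ≠ 0 := by intro h; rw [h, norm_zero] at hnΨ₁; norm_num at hnΨ₁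
  have hΨ₂0 : Ψ₂ ≠ 0 := by intro h; rw [h, norm_zero] at hnΨ₂; norm_num at hnΨ₂
  obtain ⟨r, s, hr, hs, hrs⟩ := hray.exists_pos hΨ₁0 hΨ₂0
  have hrs' : r = s := by
    have h1 := congrArg norm hrs
    simp only [norm_smul, hnΨ₁, hnΨ₂, norm_inv, norm_norm,
      inv_mul_cancel₀ hn₁.ne', inv_mul_cancel₀ hn₂.ne', mul_one,
      Real.norm_eq_abs, abs_of_pos hr, abs_of_pos hs] at h1
    exact h1
  have hΨeq : Ψ₁ = Ψ₂ := by
    have : r • Ψ₁ = r • Ψ₂ := by rw [hrs, hrs']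
    exact smul_right_injective V hr.ne' this
  refine ⟨‖Φ₂‖ / ‖Φ₁‖, by positivity, ?_⟩
  rw [div_eq_mul_inv, ← smul_smul, ← hΨ₁, hΨeq, hΨ₂, smul_smul,
    mul_inv_cancel₀ hn₂.ne', one_smul]
end

section
/- Equality case of Jensen: with T a probability measure on a compact convex K ⊂ ℝⁿ with barycentre x and f continuous convex on K, if f(x) = ∫ f dT then f is affine on the convex hull of the support of T. -/
/-!
Take finitely many points `P` of the support of `T` and balls around them, so small that they are
disjoint, and split `T` into its restrictions to the balls and to the rest of the space. Jensen's
inequality for each piece and then for the finite combination of the barycentres of the pieces,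
weighted by their masses, is squeezed between `f x` and `∫ f ∂T`, so the finite combination is an
equality case too. Since every ball has positive mass, this makes `f` affine on the convex hull of
the barycentres of the balls. As the radius tends to `0` these barycentres tend to the points of
`P`, and continuity of `f` carries the affinity over to the convex hull of `P`.
-/

open MeasureTheory

/-- The (topological) support of a measure: points all of whose neighbourhoods
have positive measure. -/
def measureSupport {α : Type*} [TopologicalSpace α] [MeasurableSpace α]
    (T : Measure α) : Set α :=
  {x | ∀ U ∈ nhds x, 0 < T U}

open Finset Filter Topology Metric Set Function

section ConvexCombination

variable {𝕜 E ι : Type*} [Field 𝕜] [LinearOrder 𝕜] [IsStrictOrderedRing 𝕜]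
  [AddCommGroup E] [Module 𝕜 E] {s : Set E} {f : E → 𝕜} {t : Finset ι} {w : ι → 𝕜} {p : ι → E}

theorem Convex.sum_mem_of_ne_zero (hs : Convex 𝕜 s) (h₀ : ∀ i ∈ t, 0 ≤ w i)
    (h₁ : ∑ i ∈ t, w i = 1) (hp : ∀ i ∈ t, w i ≠ 0 → p i ∈ s) : ∑ i ∈ t, w i • p i ∈ s := by
  classical
  rw [← sum_filter_of_ne fun i _ h => left_ne_zero_of_smul h]
  exact hs.sum_mem (fun i hi => h₀ i (mem_filter.1 hi).1) (by rwa [sum_filter_ne_zero])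
    fun i hi => hp i (mem_filter.1 hi).1 (mem_filter.1 hi).2

theorem ConvexOn.map_sum_le_of_ne_zero (hf : ConvexOn 𝕜 s f) (h₀ : ∀ i ∈ t, 0 ≤ w i)
    (h₁ : ∑ i ∈ t, w i = 1) (hp : ∀ i ∈ t, w i ≠ 0 → p i ∈ s) :
    f (∑ i ∈ t, w i • p i) ≤ ∑ i ∈ t, w i • f (p i) := by
  classical
  rw [← sum_filter_of_ne (f := fun i => w i • p i) fun i _ h => left_ne_zero_of_smul h,
    ← sum_filter_of_ne (f := fun i => w i • f (p i)) fun i _ h => left_ne_zero_of_smul h]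
  exact hf.map_sum_le (fun i hi => h₀ i (mem_filter.1 hi).1) (by rwa [sum_filter_ne_zero])
    fun i hi => hp i (mem_filter.1 hi).1 (mem_filter.1 hi).2

end ConvexCombination

theorem exists_pos_lt_one_forall_mul_le {ι : Type*} (t : Finset ι) {α β : ι → ℝ}
    (hα : ∀ i ∈ t, 0 ≤ α i) (hβα : ∀ i ∈ t, α i = 0 → β i = 0) :
    ∃ μ : ℝ, 0 < μ ∧ μ < 1 ∧ ∀ i ∈ t, μ * β i ≤ α i := by
  have hsmall : ∀ i ∈ t, ∀ᶠ μ in 𝓝 (0 : ℝ), μ * β i ≤ α i := by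
    intro i hi
    rcases (hα i hi).eq_or_lt with h | h
    · exact Eventually.of_forall fun μ => by simp [hβα i hi h.symm, ← h]
    · have : Tendsto (fun μ : ℝ => μ * β i) (𝓝 0) (𝓝 0) := by
        simpa using (continuous_mul_const (β i)).tendsto 0
      exact (this.eventually (gt_mem_nhds h)).mono fun _ => le_of_lt
  have hμ : ∀ᶠ μ in 𝓝[>] (0 : ℝ), (∀ i ∈ t, μ * β i ≤ α i) ∧ μ < 1 :=
    nhdsWithin_le_nhds (((eventually_all_finset t).2 hsmall).and (gt_mem_nhds one_pos))
  obtain ⟨μ, ⟨h1, h2⟩, h3⟩ := (hμ.and self_mem_nhdsWithin).exists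
  exact ⟨μ, h3, h2, h1⟩

/-- For small `μ > 0`, `α = μ β + (1 - μ) γ` with `γ` again a probability vector, and the Jensen
inequalities for `β` and for `γ` then both have to be equalities. -/
theorem ConvexOn.map_sum_eq_of_support_subset {E ι : Type*} [AddCommGroup E] [Module ℝ E]
    {s : Set E} {f : E → ℝ} (hf : ConvexOn ℝ s f) {t : Finset ι} {p : ι → E} {α β : ι → ℝ}
    (hα₀ : ∀ i ∈ t, 0 ≤ α i) (hα₁ : ∑ i ∈ t, α i = 1) (hp : ∀ i ∈ t, α i ≠ 0 → p i ∈ s)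
    (heq : f (∑ i ∈ t, α i • p i) = ∑ i ∈ t, α i • f (p i))
    (hβ₀ : ∀ i ∈ t, 0 ≤ β i) (hβ₁ : ∑ i ∈ t, β i = 1) (hβα : ∀ i ∈ t, α i = 0 → β i = 0) :
    f (∑ i ∈ t, β i • p i) = ∑ i ∈ t, β i • f (p i) := by
  obtain ⟨μ, hμ₀, hμ₁, hμβ⟩ := exists_pos_lt_one_forall_mul_le t hα₀ hβα
  have hμ₁' : 1 - μ ≠ 0 := by linarith
  set γ : ι → ℝ := fun i => (α i - μ * β i) / (1 - μ)
  have hαγ : ∀ i, α i = μ * β i + (1 - μ) * γ i := fun i => by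
    simp only [γ]; field_simp; ring
  have hγ₀ : ∀ i ∈ t, 0 ≤ γ i := fun i hi => div_nonneg (by linarith [hμβ i hi]) (by linarith)
  have hγ₁ : ∑ i ∈ t, γ i = 1 := by
    rw [← sum_div, sum_sub_distrib, ← mul_sum, hα₁, hβ₁, mul_one, div_self hμ₁']
  have hβp : ∀ i ∈ t, β i ≠ 0 → p i ∈ s := fun i hi hβ =>
    hp i hi fun hα => hβ (hβα i hi hα)
  have hγp : ∀ i ∈ t, γ i ≠ 0 → p i ∈ s := fun i hi hγ =>
    hp i hi fun hα => hγ (by simp [γ, hα, hβα i hi hα])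
  have hpoint : ∑ i ∈ t, α i • p i = μ • ∑ i ∈ t, β i • p i + (1 - μ) • ∑ i ∈ t, γ i • p i := by
    simp only [smul_sum, smul_smul, ← sum_add_distrib, ← add_smul, ← hαγ]
  have hvalue : ∑ i ∈ t, α i • f (p i) =
      μ * ∑ i ∈ t, β i • f (p i) + (1 - μ) * ∑ i ∈ t, γ i • f (p i) := by
    simp only [mul_sum, smul_eq_mul, ← mul_assoc, ← sum_add_distrib, ← add_mul, ← hαγ]
  have hsplit : f (∑ i ∈ t, α i • p i) ≤
      μ * f (∑ i ∈ t, β i • p i) + (1 - μ) * f (∑ i ∈ t, γ i • p i) := by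
    rw [hpoint]
    exact hf.2 (hf.1.sum_mem_of_ne_zero hβ₀ hβ₁ hβp) (hf.1.sum_mem_of_ne_zero hγ₀ hγ₁ hγp)
      hμ₀.le (by linarith) (by ring)
  have hγle := hf.map_sum_le_of_ne_zero hγ₀ hγ₁ hγp
  refine le_antisymm (hf.map_sum_le_of_ne_zero hβ₀ hβ₁ hβp) (le_of_mul_le_mul_left ?_ hμ₀)
  linarith [mul_le_mul_of_nonneg_left hγle (sub_nonneg.2 hμ₁.le)]

theorem map_add_eq_of_forall_finset_map_sum_eq {E : Type*} [AddCommGroup E] [Module ℝ E]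
    {S : Set E} {f : E → ℝ}
    (h : ∀ P : Finset E, ↑P ⊆ S → ∀ β : E → ℝ, (∀ q ∈ P, 0 ≤ β q) → ∑ q ∈ P, β q = 1 →
      f (∑ q ∈ P, β q • q) = ∑ q ∈ P, β q • f q)
    {a b : E} (ha : a ∈ convexHull ℝ S) (hb : b ∈ convexHull ℝ S) {t : ℝ} (ht₀ : 0 ≤ t)
    (ht₁ : t ≤ 1) : f (t • a + (1 - t) • b) = t * f a + (1 - t) * f b := by
  classical
  simp only [convexHull_eq_union_convexHull_finite_subsets S, mem_iUnion, exists_prop] at ha hb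
  obtain ⟨Pa, hPa, ha⟩ := ha
  obtain ⟨Pb, hPb, hb⟩ := hb
  have hP : ↑(Pa ∪ Pb) ⊆ S := by rw [coe_union]; exact union_subset hPa hPb
  obtain ⟨β, hβ₀, hβ₁, rfl⟩ := mem_convexHull'.1 (convexHull_mono (by simp) ha :
    a ∈ convexHull ℝ ↑(Pa ∪ Pb))
  obtain ⟨γ, hγ₀, hγ₁, rfl⟩ := mem_convexHull'.1 (convexHull_mono (by simp) hb :
    b ∈ convexHull ℝ ↑(Pa ∪ Pb))
  have hw₀ : ∀ q ∈ Pa ∪ Pb, 0 ≤ t * β q + (1 - t) * γ q := fun q hq =>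
    add_nonneg (mul_nonneg ht₀ (hβ₀ q hq)) (mul_nonneg (by linarith) (hγ₀ q hq))
  have hw₁ : ∑ q ∈ Pa ∪ Pb, (t * β q + (1 - t) * γ q) = 1 := by
    rw [sum_add_distrib, ← mul_sum, ← mul_sum, hβ₁, hγ₁]; ring
  have hcomb : t • ∑ q ∈ Pa ∪ Pb, β q • q + (1 - t) • ∑ q ∈ Pa ∪ Pb, γ q • q =
      ∑ q ∈ Pa ∪ Pb, (t * β q + (1 - t) * γ q) • q := by
    simp only [smul_sum, smul_smul, add_smul, sum_add_distrib]
  rw [hcomb, h _ hP _ hw₀ hw₁, h _ hP β hβ₀ hβ₁, h _ hP γ hγ₀ hγ₁]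
  simp only [smul_eq_mul, mul_sum, add_mul, sum_add_distrib, mul_assoc]

theorem Finset.exists_pos_pairwiseDisjoint_ball {E : Type*} [MetricSpace E] (P : Finset E) :
    ∃ δ > 0, (P : Set E).PairwiseDisjoint (ball · δ) := by
  have hsmall : ∀ p ∈ P, ∀ q ∈ P, ∀ᶠ δ in 𝓝 (0 : ℝ), p ≠ q → Disjoint (ball p δ) (ball q δ) := by
    intro p _ q _
    rcases eq_or_ne p q with rfl | hpq
    · exact Eventually.of_forall fun _ h => absurd rfl h
    · exact (gt_mem_nhds (half_pos (dist_pos.2 hpq))).mono fun δ hδ _ =>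
        ball_disjoint_ball (by linarith)
  have hδ : ∀ᶠ δ in 𝓝[>] (0 : ℝ), ∀ p ∈ P, ∀ q ∈ P, p ≠ q → Disjoint (ball p δ) (ball q δ) :=
    nhdsWithin_le_nhds <| (eventually_all_finset P).2 fun p hp =>
      (eventually_all_finset P).2 fun q hq => hsmall p hp q hq
  obtain ⟨δ, hδ, hpos⟩ := (hδ.and self_mem_nhdsWithin).exists
  exact ⟨δ, hpos, fun p hp q hq => hδ p hp q hq⟩

theorem measureSupport_subset_of_ae_mem {α : Type*} [TopologicalSpace α] [MeasurableSpace α]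
    {T : Measure α} {K : Set α} (hK : IsClosed K) (hTK : ∀ᵐ y ∂T, y ∈ K) :
    measureSupport T ⊆ K := fun _ hy =>
  by_contra fun hyK => (hy _ (hK.isOpen_compl.mem_nhds hyK)).ne' (ae_iff.1 hTK)

theorem sum_setIntegral_eq_integral {α F ι : Type*} [MeasurableSpace α] {μ : Measure α}
    [NormedAddCommGroup F] [NormedSpace ℝ F] [Fintype ι] {A : ι → Set α}
    (hA : ∀ i, MeasurableSet (A i)) (hAd : Pairwise (Disjoint on A)) (hAU : ⋃ i, A i = univ)
    {g : α → F} (hg : Integrable g μ) : ∑ i, ∫ y in A i, g y ∂μ = ∫ y, g y ∂μ := by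
  rw [← integral_iUnion_fintype hA hAd fun i => hg.integrableOn, hAU, Measure.restrict_univ]

section Barycentre

variable {E : Type*} [NormedAddCommGroup E] [NormedSpace ℝ E] [CompleteSpace E]
  [MeasurableSpace E] {T : Measure E} {K : Set E} {f : E → ℝ}

theorem ConvexOn.measureReal_smul_map_setAverage_le [IsFiniteMeasure T] (hf : ConvexOn ℝ K f)
    (hfc : ContinuousOn f K) (hK : IsClosed K) (hTK : ∀ᵐ y ∂T, y ∈ K) (hid : Integrable id T)
    (hfi : Integrable f T) (A : Set E) :
    T.real A • f (⨍ y in A, y ∂T) ≤ ∫ y in A, f y ∂T := by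
  rcases eq_or_ne (T A) 0 with h | h
  · simp [Measure.real, h, setIntegral_measure_zero]
  rw [← measure_smul_setAverage _ (measure_ne_top _ _)]
  exact smul_le_smul_of_nonneg_left (hf.map_set_average_le hfc hK h (measure_ne_top _ _)
    (ae_restrict_of_ae hTK) hid.integrableOn hfi.integrableOn) measureReal_nonneg

variable [IsProbabilityMeasure T]

/-- Moving the mass of each piece to its barycentre gives a measure that sits between the two sides
of Jensen's inequality for `T`, so it is an equality case as well. -/
theorem ConvexOn.map_sum_setAverage_eq {ι : Type*} [Fintype ι] {A : ι → Set E}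
    (hA : ∀ i, MeasurableSet (A i)) (hAd : Pairwise (Disjoint on A)) (hAU : ⋃ i, A i = univ)
    (hf : ConvexOn ℝ K f) (hfc : ContinuousOn f K) (hK : IsClosed K) (hTK : ∀ᵐ y ∂T, y ∈ K)
    (hid : Integrable id T) (hfi : Integrable f T) (heq : f (∫ y, y ∂T) = ∫ y, f y ∂T)
    {β : ι → ℝ} (hβ₀ : ∀ i, 0 ≤ β i) (hβ₁ : ∑ i, β i = 1) (hβA : ∀ i, T (A i) = 0 → β i = 0) :
    f (∑ i, β i • ⨍ y in A i, y ∂T) = ∑ i, β i • f (⨍ y in A i, y ∂T) := by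
  have hmem : ∀ i ∈ Finset.univ, T.real (A i) ≠ 0 → ⨍ y in A i, y ∂T ∈ K := fun i _ hi =>
    hf.1.set_average_mem hK ((measureReal_ne_zero_iff (measure_ne_top _ _)).1 hi)
      (measure_ne_top _ _) (ae_restrict_of_ae hTK) hid.integrableOn
  have hw₁ : ∑ i, T.real (A i) = 1 := by
    rw [← measureReal_iUnion_fintype hAd hA, hAU, probReal_univ]
  have hbary : ∑ i, T.real (A i) • ⨍ y in A i, y ∂T = ∫ y, y ∂T := by
    simp only [measure_smul_setAverage _ (measure_ne_top _ _)]
    exact sum_setIntegral_eq_integral hA hAd hAU hid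
  have heqw : f (∑ i, T.real (A i) • ⨍ y in A i, y ∂T) =
      ∑ i, T.real (A i) • f (⨍ y in A i, y ∂T) := by
    refine le_antisymm (hf.map_sum_le_of_ne_zero (fun i _ => measureReal_nonneg) hw₁ hmem) ?_
    calc ∑ i, T.real (A i) • f (⨍ y in A i, y ∂T) ≤ ∑ i, ∫ y in A i, f y ∂T :=
          sum_le_sum fun i _ => hf.measureReal_smul_map_setAverage_le hfc hK hTK hid hfi (A i)
      _ = f (∑ i, T.real (A i) • ⨍ y in A i, y ∂T) := by
          rw [sum_setIntegral_eq_integral hA hAd hAU hfi, hbary, heq]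
  exact hf.map_sum_eq_of_support_subset (fun i _ => measureReal_nonneg) hw₁ hmem heqw
    (fun i _ => hβ₀ i) hβ₁ fun i _ h => hβA i ((measureReal_eq_zero_iff (measure_ne_top _ _)).1 h)

theorem ConvexOn.exists_near_map_sum_eq [OpensMeasurableSpace E]
    (hf : ConvexOn ℝ K f) (hfc : ContinuousOn f K) (hK : IsClosed K) (hTK : ∀ᵐ y ∂T, y ∈ K)
    (hid : Integrable id T) (hfi : Integrable f T) (heq : f (∫ y, y ∂T) = ∫ y, f y ∂T)
    {P : Finset E} (hP : ↑P ⊆ measureSupport T) {ε : ℝ} (hε : 0 < ε)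
    (hPε : (P : Set E).PairwiseDisjoint (ball · ε)) :
    ∃ z : E → E, (∀ q ∈ P, z q ∈ K ∧ dist (z q) q ≤ ε) ∧
      ∀ β : E → ℝ, (∀ q ∈ P, 0 ≤ β q) → ∑ q ∈ P, β q = 1 →
        f (∑ q ∈ P, β q • z q) = ∑ q ∈ P, β q • f (z q) := by
  set U : Set E := ⋃ q : P, ball (q : E) ε
  set A : Option P → Set E := fun o => o.elim Uᶜ fun q => ball (q : E) ε
  have hA : ∀ o, MeasurableSet (A o) := by
    rintro (_ | q)
    · exact (isOpen_iUnion fun q => isOpen_ball).measurableSet.compl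
    · exact measurableSet_ball
  have hAd : Pairwise (Disjoint on A) := by
    rintro (_ | q) (_ | r) hqr
    · exact absurd rfl hqr
    · exact disjoint_compl_left.mono_right (subset_iUnion (fun q : P => ball (q : E) ε) r)
    · exact disjoint_compl_right.mono_left (subset_iUnion (fun q : P => ball (q : E) ε) q)
    · exact hPε q.2 r.2 (Subtype.coe_injective.ne fun h => hqr (congrArg some h))
  have hAU : ⋃ o, A o = Set.univ := by
    rw [iUnion_option]
    exact compl_union_self U
  have hball : ∀ q ∈ P, T (ball q ε) ≠ 0 := fun q hq =>
    (hP hq _ (ball_mem_nhds q hε)).ne'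
  refine ⟨fun q => ⨍ y in ball q ε, y ∂T, fun q hq => ?_, fun β hβ₀ hβ₁ => ?_⟩
  · have hsub : ∀ᵐ y ∂T.restrict (ball q ε), y ∈ K ∩ closedBall q ε :=
      (ae_restrict_of_ae hTK).and ((ae_restrict_mem measurableSet_ball).mono
        fun y hy => ball_subset_closedBall hy)
    exact (hf.1.inter (convex_closedBall q ε)).set_average_mem (hK.inter isClosed_closedBall)
      (hball q hq) (measure_ne_top _ _) hsub hid.integrableOn
  · set β' : Option P → ℝ := fun o => o.elim 0 fun q => β q
    have hβ'₁ : ∑ o, β' o = 1 := by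
      simpa [β', Fintype.sum_option, sum_attach P β] using hβ₁
    have key := hf.map_sum_setAverage_eq hA hAd hAU hfc hK hTK hid hfi heq (β := β')
      (by rintro (_ | q) <;> simp [β', hβ₀]) hβ'₁
      (by rintro (_ | q) h; exacts [rfl, absurd h (hball q q.2)])
    simpa [β', A, Fintype.sum_option, sum_attach P (fun q => β q • ⨍ y in ball q ε, y ∂T),
      sum_attach P (fun q => β q * f (⨍ y in ball q ε, y ∂T))] using key

theorem ConvexOn.map_sum_eq_of_subset_measureSupport [OpensMeasurableSpace E]
    (hf : ConvexOn ℝ K f) (hfc : ContinuousOn f K) (hK : IsClosed K) (hTK : ∀ᵐ y ∂T, y ∈ K)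
    (hid : Integrable id T) (hfi : Integrable f T) (heq : f (∫ y, y ∂T) = ∫ y, f y ∂T)
    {P : Finset E} (hP : ↑P ⊆ measureSupport T) {β : E → ℝ} (hβ₀ : ∀ q ∈ P, 0 ≤ β q)
    (hβ₁ : ∑ q ∈ P, β q = 1) : f (∑ q ∈ P, β q • q) = ∑ q ∈ P, β q • f q := by
  obtain ⟨δ, hδ, hPδ⟩ := P.exists_pos_pairwiseDisjoint_ball
  obtain ⟨u, -, hu, hu0⟩ := exists_seq_strictAnti_tendsto' hδ
  choose z hz hzaff using fun n => hf.exists_near_map_sum_eq hfc hK hTK hid hfi heq hP (hu n).1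
    (hPδ.mono fun q => ball_subset_ball (hu n).2.le)
  have hPK : ∀ q ∈ P, q ∈ K := fun q hq => measureSupport_subset_of_ae_mem hK hTK (hP hq)
  have hzq : ∀ q ∈ P, Tendsto (fun n => z n q) atTop (𝓝[K] q) := fun q hq =>
    tendsto_nhdsWithin_iff.2 ⟨tendsto_iff_dist_tendsto_zero.2 <| squeeze_zero
      (fun _ => dist_nonneg) (fun n => (hz n q hq).2) hu0,
      Eventually.of_forall fun n => (hz n q hq).1⟩
  have hsum : Tendsto (fun n => ∑ q ∈ P, β q • z n q) atTop (𝓝[K] (∑ q ∈ P, β q • q)) :=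
    tendsto_nhdsWithin_iff.2 ⟨tendsto_finsetSum _ fun q hq =>
      ((hzq q hq).mono_right nhdsWithin_le_nhds).const_smul _,
      Eventually.of_forall fun n => hf.1.sum_mem hβ₀ hβ₁ fun q hq => (hz n q hq).1⟩
  refine tendsto_nhds_unique ((hfc _ (hf.1.sum_mem hβ₀ hβ₁ hPK)).tendsto.comp hsum) ?_
  simp_rw [comp_def, hzaff _ β hβ₀ hβ₁]
  exact tendsto_finsetSum _ fun q hq => ((hfc q (hPK q hq)).tendsto.comp (hzq q hq)).const_smul _

end Barycentre

theorem jensen_equality_case_general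
    {n : ℕ} (K : Set (EuclideanSpace ℝ (Fin n)))
    (hKcomp : IsCompact K)
    (T : Measure (EuclideanSpace ℝ (Fin n))) [IsProbabilityMeasure T]
    (hTK : T Kᶜ = 0)
    (x : EuclideanSpace ℝ (Fin n))
    (hbary : ∫ y, y ∂T = x)
    (f : EuclideanSpace ℝ (Fin n) → ℝ)
    (hfc : ContinuousOn f K) (hfconv : ConvexOn ℝ K f)
    (heq : f x = ∫ y, f y ∂T) :
    ∀ a ∈ convexHull ℝ (measureSupport T), ∀ b ∈ convexHull ℝ (measureSupport T),
      ∀ t : ℝ, 0 ≤ t → t ≤ 1 →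
        f (t • a + (1 - t) • b) = t * f a + (1 - t) * f b := by
  intro a ha b hb t ht₀ ht₁
  have hKae : ∀ᵐ y ∂T, y ∈ K := ae_iff.2 hTK
  have hTrestr : T.restrict K = T := Measure.restrict_eq_self_of_ae_mem hKae
  have hid : Integrable id T := by
    rw [← hTrestr]; exact continuous_id.continuousOn.integrableOn_compact hKcomp
  have hfi : Integrable f T := by rw [← hTrestr]; exact hfc.integrableOn_compact hKcomp
  exact map_add_eq_of_forall_finset_map_sum_eq (fun P hP β hβ₀ hβ₁ =>
    hfconv.map_sum_eq_of_subset_measureSupport hfc hKcomp.isClosed hKae hid hfi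
      (hbary ▸ heq) hP hβ₀ hβ₁) ha hb ht₀ ht₁

theorem jensen_equality_case
    {n : ℕ} (K : Set (EuclideanSpace ℝ (Fin n)))
    (hKcomp : IsCompact K) (hKconv : Convex ℝ K)
    (T : Measure (EuclideanSpace ℝ (Fin n))) [IsProbabilityMeasure T]
    (hTK : T Kᶜ = 0)
    (x : EuclideanSpace ℝ (Fin n)) (hxK : x ∈ K)
    (hbary : ∫ y, y ∂T = x)
    (f : EuclideanSpace ℝ (Fin n) → ℝ)
    (hfc : ContinuousOn f K) (hfconv : ConvexOn ℝ K f)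
    (heq : f x = ∫ y, f y ∂T) :
    ∀ a ∈ convexHull ℝ (measureSupport T), ∀ b ∈ convexHull ℝ (measureSupport T),
      ∀ t : ℝ, 0 ≤ t → t ≤ 1 →
        f (t • a + (1 - t) • b) = t * f a + (1 - t) * f b :=
  jensen_equality_case_general K hKcomp T hTK x hbary f hfc hfconv heq
end

section
/- Let A(x) = (12(l²−1)x − 6(l²−2l−1))/(l²+4l+1) for a fixed l > 0. Then for every convex function g : [0,1] → ℝ, ∫₀¹ (1+(l−1)x)·A(x)·g(x) dx ≤ g(0) + l·g(1). -/
/-! With `w x = (1 + (l - 1) x) A(x)` and `v` the primitive of `w` with `v 0 = -1`, one has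
`v 1 = l` and `∫₀¹ v = 0`, so integrating by parts against the right derivative `g'₊` of `g`
reduces the claim to `∫₀¹ v g'₊ ≥ 0`. Since `v' = w` has the sign of the affine function `A`,
`v` is quasiconvex (`l ≥ 1`) or quasiconcave (`l ≤ 1`), hence changes sign exactly once, at some
`c`, from negative to positive. As `g'₊` is monotone, `v (g'₊ - g'₊ c) ≥ 0`, and therefore
`∫ v g'₊ ≥ g'₊ c ∫ v = 0`. Because `g'₊` may blow up at `0` and `1`, the integration by parts is
carried out on subintervals `[x, y] ⊂ (0, 1)`, followed by a limit. -/

open intervalIntegral Set MeasureTheory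

theorem quasiconvexOn_of_hasDerivAt_of_monotoneOn_sign {s : Set ℝ} {f f' : ℝ → ℝ}
    (hs : Convex ℝ s) (hf : ∀ x ∈ s, HasDerivAt f (f' x) x)
    (hsign : MonotoneOn (fun x ↦ SignType.sign (f' x)) s) : QuasiconvexOn ℝ s f := by
  have hsub : ∀ {u v}, u ∈ s → v ∈ s → Icc u v ⊆ s := fun hu hv ↦ hs.ordConnected.out hu hv
  have hcont : ∀ {u v}, u ∈ s → v ∈ s → ContinuousOn f (Icc u v) := fun hu hv t ht ↦
    (hf t (hsub hu hv ht)).continuousAt.continuousWithinAt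
  have hderiv : ∀ {u v}, u ∈ s → v ∈ s → ∀ t ∈ interior (Icc u v),
      HasDerivWithinAt f (f' t) (interior (Icc u v)) t := fun hu hv t ht ↦
    (hf t (hsub hu hv (interior_subset ht))).hasDerivWithinAt
  refine fun r ↦ convex_iff_ordConnected.2 ⟨fun x hx y hy z hz ↦ ⟨hsub hx.1 hy.1 hz, ?_⟩⟩
  have hzs := hsub hx.1 hy.1 hz
  by_cases hfz : SignType.sign (f' z) ≤ 0
  · have hanti : AntitoneOn f (Icc x z) :=
      antitoneOn_of_hasDerivWithinAt_nonpos (convex_Icc x z) (hcont hx.1 hzs) (hderiv hx.1 hzs)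
        fun t ht ↦ sign_nonpos_iff.1 <| (hsign (hsub hx.1 hzs (interior_subset ht)) hzs
          (interior_subset ht).2).trans hfz
    exact (hanti ⟨le_rfl, hz.1⟩ ⟨hz.1, le_rfl⟩ hz.1).trans hx.2
  · have hmono : MonotoneOn f (Icc z y) :=
      monotoneOn_of_hasDerivWithinAt_nonneg (convex_Icc z y) (hcont hzs hy.1) (hderiv hzs hy.1)
        fun t ht ↦ sign_nonneg_iff.1 <| (le_of_not_ge hfz).trans
          (hsign hzs (hsub hzs hy.1 (interior_subset ht)) (interior_subset ht).1)
    exact (hmono ⟨le_rfl, hz.2⟩ ⟨hz.2, le_rfl⟩ hz.2).trans hy.2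

theorem quasiconcaveOn_of_hasDerivAt_of_antitoneOn_sign {s : Set ℝ} {f f' : ℝ → ℝ}
    (hs : Convex ℝ s) (hf : ∀ x ∈ s, HasDerivAt f (f' x) x)
    (hsign : AntitoneOn (fun x ↦ SignType.sign (f' x)) s) : QuasiconcaveOn ℝ s f := by
  have hneg : QuasiconvexOn ℝ s (-f) :=
    quasiconvexOn_of_hasDerivAt_of_monotoneOn_sign hs (fun x hx ↦ (hf x hx).neg)
      fun x hx y hy hxy ↦ by simpa [Left.sign_neg] using hsign hx hy hxy
  intro r
  simpa using hneg (-r)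

variable {f : ℝ → ℝ} {a b : ℝ}

theorem QuasiconvexOn.exists_sign_change (hf : QuasiconvexOn ℝ (Icc a b) f)
    (hcont : ContinuousOn f (Icc a b)) (hab : a ≤ b) (ha : f a < 0) (hb : 0 < f b) :
    ∃ c ∈ Ioo a b, (∀ x ∈ Icc a c, f x ≤ 0) ∧ ∀ x ∈ Icc c b, 0 ≤ f x := by
  obtain ⟨c, hc, hfc⟩ := intermediate_value_Ioo hab hcont ⟨ha, hb⟩
  have hac : a ∈ Icc a b := left_mem_Icc.2 hab
  refine ⟨c, hc, fun x hx ↦ ?_, fun x hx ↦ ?_⟩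
  · exact ((hf 0).ordConnected.out ⟨hac, ha.le⟩ ⟨Ioo_subset_Icc_self hc, hfc.le⟩ hx).2
  · by_contra! hx0
    have := ((hf.convex_lt 0).ordConnected.out ⟨hac, ha⟩ ⟨⟨hc.1.le.trans hx.1, hx.2⟩, hx0⟩
      ⟨hc.1.le, hx.1⟩).2
    linarith

theorem QuasiconcaveOn.exists_sign_change (hf : QuasiconcaveOn ℝ (Icc a b) f)
    (hcont : ContinuousOn f (Icc a b)) (hab : a ≤ b) (ha : f a < 0) (hb : 0 < f b) :
    ∃ c ∈ Ioo a b, (∀ x ∈ Icc a c, f x ≤ 0) ∧ ∀ x ∈ Icc c b, 0 ≤ f x := by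
  obtain ⟨c, hc, hfc⟩ := intermediate_value_Ioo hab hcont ⟨ha, hb⟩
  have hbc : b ∈ Icc a b := right_mem_Icc.2 hab
  refine ⟨c, hc, fun x hx ↦ ?_, fun x hx ↦ ?_⟩
  · by_contra! hx0
    have := ((hf.convex_gt 0).ordConnected.out ⟨⟨hx.1, hx.2.trans hc.2.le⟩, hx0⟩ ⟨hbc, hb⟩
      ⟨hx.2, hc.2.le⟩).2
    linarith
  · exact ((hf 0).ordConnected.out ⟨Ioo_subset_Icc_self hc, hfc.ge⟩ ⟨hbc, hb.le⟩ hx).2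

variable {S : Set ℝ} {g v w : ℝ → ℝ}

theorem ConvexOn.integral_deriv_mul_le {x y c : ℝ} (hg : ConvexOn ℝ S g)
    (hxy : Icc x y ⊆ interior S)
    (hv : ∀ t, HasDerivAt v (w t) t) (hw : Continuous w) (hc : c ∈ Icc x y)
    (hneg : ∀ t ∈ Icc x c, v t ≤ 0) (hpos : ∀ t ∈ Icc c y, 0 ≤ v t) :
    ∫ t in x..y, w t * g t ≤
      v y * g y - v x * g x - derivWithin g (Ioi c) c * ∫ t in x..y, v t := by
  set φ := fun t ↦ derivWithin g (Ioi t) t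
  have hle : x ≤ y := hc.1.trans hc.2
  have hvc : Continuous v := continuous_iff_continuousAt.2 fun t ↦ (hv t).continuousAt
  have hφ : MonotoneOn φ (Icc x y) := hg.monotoneOn_rightDeriv.mono hxy
  have hwg : IntervalIntegrable (fun t ↦ w t * g t) volume x y :=
    (hw.continuousOn.mul (hg.continuousOn_interior.mono hxy)).intervalIntegrable_of_Icc hle
  have hvφ : IntervalIntegrable (fun t ↦ v t * φ t) volume x y :=
    (MonotoneOn.intervalIntegrable (by rwa [uIcc_of_le hle])).continuousOn_mul hvc.continuousOn
  have hparts : ∫ t in x..y, (w t * g t + v t * φ t) = v y * g y - v x * g x :=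
    integral_eq_sub_of_hasDeriv_right_of_le hle
      (hvc.continuousOn.mul (hg.continuousOn_interior.mono hxy))
      (fun t ht ↦ (hv t).hasDerivWithinAt.mul
        (hg.hasDerivWithinAt_rightDeriv_of_mem_interior (hxy (Ioo_subset_Icc_self ht))))
      (hwg.add hvφ)
  -- `v` and `φ - φ c` have the same sign on `[x, y]`
  have hφc : ∫ t in x..y, v t * φ c ≤ ∫ t in x..y, v t * φ t := by
    refine integral_mono_on hle ((hvc.mul continuous_const).intervalIntegrable _ _) hvφ
      fun t ht ↦ ?_
    rcases le_total t c with htc | hct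
    · exact mul_le_mul_of_nonpos_left (hφ ht ⟨hc.1, hc.2⟩ htc) (hneg t ⟨ht.1, htc⟩)
    · exact mul_le_mul_of_nonneg_left (hφ ⟨hc.1, hc.2⟩ ht hct) (hpos t ⟨hct, ht.2⟩)
  rw [integral_add hwg hvφ] at hparts
  rw [intervalIntegral.integral_mul_const] at hφc
  linarith

theorem ConvexOn.integral_deriv_mul_le_of_integral_eq_zero {a b c : ℝ}
    (hg : ConvexOn ℝ (Icc a b) g) (hgc : ContinuousOn g (Icc a b))
    (hv : ∀ t, HasDerivAt v (w t) t) (hw : Continuous w)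
    (hc : c ∈ Ioo a b) (hneg : ∀ t ∈ Icc a c, v t ≤ 0) (hpos : ∀ t ∈ Icc c b, 0 ≤ v t)
    (hv₀ : ∫ t in a..b, v t = 0) :
    ∫ t in a..b, w t * g t ≤ v b * g b - v a * g a := by
  have hab : a ≤ b := hc.1.le.trans hc.2.le
  have hvc : Continuous v := continuous_iff_continuousAt.2 fun t ↦ (hv t).continuousAt
  -- the inequality on `[x, y]` reads `H y ≤ H x`; continuity of `H` then lets `x → a`, `y → b`
  set H := fun x ↦ (∫ t in a..x, w t * g t) - v x * g x +
    derivWithin g (Ioi c) c * ∫ t in a..x, v t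
  have hH : ContinuousOn H (Icc a b) := by
    have hprim : ∀ {f : ℝ → ℝ}, ContinuousOn f (Icc a b) →
        ContinuousOn (fun x ↦ ∫ t in a..x, f t) (Icc a b) := fun hf ↦ by
      rw [← uIcc_of_le hab] at hf ⊢
      exact continuousOn_primitive_interval hf.integrableOn_uIcc
    exact ((hprim (hw.continuousOn.mul hgc)).sub (hvc.continuousOn.mul hgc)).add
      (continuousOn_const.mul (hprim hvc.continuousOn))
  have hdecr : ∀ x ∈ Ioc a c, ∀ y ∈ Ico c b, H y ≤ H x := by
    intro x hx y hy
    have hsub : Icc x y ⊆ interior (Icc a b) := by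
      rw [interior_Icc]; exact Icc_subset_Ioo hx.1 hy.2
    have hint : ∀ {f : ℝ → ℝ}, ContinuousOn f (Icc a b) →
        (∫ t in a..y, f t) - ∫ t in a..x, f t = ∫ t in x..y, f t := fun hf ↦
      integral_interval_sub_left
        ((hf.mono (Icc_subset_Icc le_rfl hy.2.le)).intervalIntegrable_of_Icc
          (hx.1.le.trans (hx.2.trans hy.1)))
        ((hf.mono (Icc_subset_Icc le_rfl (hx.2.trans hc.2.le))).intervalIntegrable_of_Icc hx.1.le)
    have := hg.integral_deriv_mul_le hsub hv hw ⟨hx.2, hy.1⟩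
      (fun t ht ↦ hneg t ⟨hx.1.le.trans ht.1, ht.2⟩)
      (fun t ht ↦ hpos t ⟨ht.1, ht.2.trans hy.2.le⟩)
    rw [← hint (f := fun t ↦ w t * g t) (hw.continuousOn.mul hgc), ← hint hvc.continuousOn]
      at this
    simp only [H]
    linarith
  have hbc : H b ≤ H c :=
    ContinuousWithinAt.closure_le (s := Ioo c b) (by simp [closure_Ioo hc.2.ne, hc.2.le])
      ((hH b (right_mem_Icc.2 hab)).mono
        (Ioo_subset_Icc_self.trans (Icc_subset_Icc hc.1.le le_rfl)))
      continuousWithinAt_const fun y hy ↦ hdecr c ⟨hc.1, le_rfl⟩ y ⟨hy.1.le, hy.2⟩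
  have hca : H c ≤ H a :=
    ContinuousWithinAt.closure_le (s := Ioo a c) (by simp [closure_Ioo hc.1.ne, hc.1.le])
      continuousWithinAt_const
      ((hH a (left_mem_Icc.2 hab)).mono
        (Ioo_subset_Icc_self.trans (Icc_subset_Icc le_rfl hc.2.le)))
      fun x hx ↦ hdecr x ⟨hx.1, hx.2.le⟩ c ⟨le_rfl, hc.2⟩
  simp only [H, integral_same, hv₀] at hbc hca
  linarith

namespace Trapezium

variable {l x : ℝ}

noncomputable def A (l x : ℝ) : ℝ :=
  (12 * (l ^ 2 - 1) * x - 6 * (l ^ 2 - 2 * l - 1)) / (l ^ 2 + 4 * l + 1)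

noncomputable def weight (l x : ℝ) : ℝ := (1 + (l - 1) * x) * A l x

noncomputable def weightPrimitive (l x : ℝ) : ℝ :=
  (4 * (l - 1) ^ 2 * (l + 1) * x ^ 3 + 3 * (l - 1) * (-l ^ 2 + 4 * l + 3) * x ^ 2
    - 6 * (l ^ 2 - 2 * l - 1) * x) / (l ^ 2 + 4 * l + 1) - 1

theorem denom_pos (hl : 0 < l) : 0 < l ^ 2 + 4 * l + 1 := by positivity

theorem continuous_weight (l : ℝ) : Continuous (weight l) := by
  unfold weight A; fun_prop

theorem hasDerivAt_weightPrimitive (l x : ℝ) :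
    HasDerivAt (weightPrimitive l) (weight l x) x := by
  have h := (((((hasDerivAt_pow 3 x).const_mul (4 * (l - 1) ^ 2 * (l + 1))).add
    ((hasDerivAt_pow 2 x).const_mul (3 * (l - 1) * (-l ^ 2 + 4 * l + 3)))).sub
    ((hasDerivAt_id x).const_mul (6 * (l ^ 2 - 2 * l - 1)))).div_const
    (l ^ 2 + 4 * l + 1)).sub_const 1
  refine h.congr_deriv ?_
  simp only [weight, A]; push_cast; ring

theorem weightPrimitive_zero (l : ℝ) : weightPrimitive l 0 = -1 := by
  simp [weightPrimitive]

theorem weightPrimitive_one (hl : 0 < l) : weightPrimitive l 1 = l := by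
  have hD := (denom_pos hl).ne'
  simp only [weightPrimitive]; field_simp; ring

theorem integral_weightPrimitive (hl : 0 < l) : ∫ x in (0 : ℝ)..1, weightPrimitive l x = 0 := by
  have hD := (denom_pos hl).ne'
  set V : ℝ → ℝ := fun x ↦
    ((l - 1) ^ 2 * (l + 1) * x ^ 4 + (l - 1) * (-l ^ 2 + 4 * l + 3) * x ^ 3
      - 3 * (l ^ 2 - 2 * l - 1) * x ^ 2) / (l ^ 2 + 4 * l + 1) - x
  have hV : ∀ x, HasDerivAt V (weightPrimitive l x) x := fun x ↦ by
    have h := (((((hasDerivAt_pow 4 x).const_mul ((l - 1) ^ 2 * (l + 1))).add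
      ((hasDerivAt_pow 3 x).const_mul ((l - 1) * (-l ^ 2 + 4 * l + 3)))).sub
      ((hasDerivAt_pow 2 x).const_mul (3 * (l ^ 2 - 2 * l - 1)))).div_const
      (l ^ 2 + 4 * l + 1)).sub (hasDerivAt_id x)
    refine h.congr_deriv ?_
    simp only [weightPrimitive]; push_cast; ring
  have hcont : Continuous (weightPrimitive l) :=
    continuous_iff_continuousAt.2 fun x ↦ (hasDerivAt_weightPrimitive l x).continuousAt
  rw [integral_eq_sub_of_hasDerivAt (fun x _ ↦ hV x) (hcont.intervalIntegrable _ _)]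
  simp only [V]; field_simp; ring

theorem sign_weight (hl : 0 < l) (hx : x ∈ Icc (0 : ℝ) 1) :
    SignType.sign (weight l x) = SignType.sign (A l x) := by
  have hu : 0 < 1 + (l - 1) * x := by nlinarith [mul_nonneg (sq_nonneg l) hx.1, hx.2]
  rw [weight, sign_mul, sign_pos hu, one_mul]

theorem monotone_A (hl : 1 ≤ l) : Monotone (A l) := fun x y hxy ↦ by
  unfold A
  gcongr
  nlinarith

theorem antitone_A (hl₀ : 0 < l) (hl : l ≤ 1) : Antitone (A l) := fun x y hxy ↦ by
  have := denom_pos hl₀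
  refine div_le_div_of_nonneg_right ?_ this.le
  nlinarith [mul_le_mul_of_nonneg_left hxy (by nlinarith : (0 : ℝ) ≤ 1 - l ^ 2)]

theorem exists_sign_change_weightPrimitive (hl : 0 < l) :
    ∃ c ∈ Ioo (0 : ℝ) 1, (∀ x ∈ Icc 0 c, weightPrimitive l x ≤ 0) ∧
      ∀ x ∈ Icc c 1, 0 ≤ weightPrimitive l x := by
  have hderiv : ∀ x ∈ Icc (0 : ℝ) 1, HasDerivAt (weightPrimitive l) (weight l x) x :=
    fun x _ ↦ hasDerivAt_weightPrimitive l x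
  have hcont : ContinuousOn (weightPrimitive l) (Icc 0 1) :=
    fun x hx ↦ (hderiv x hx).continuousAt.continuousWithinAt
  have h₀ : weightPrimitive l 0 < 0 := by rw [weightPrimitive_zero]; norm_num
  have h₁ : 0 < weightPrimitive l 1 := by rwa [weightPrimitive_one hl]
  rcases le_total 1 l with hl₁ | hl₁
  · refine (quasiconvexOn_of_hasDerivAt_of_monotoneOn_sign (convex_Icc 0 1) hderiv
      fun x hx y hy hxy ↦ ?_).exists_sign_change hcont zero_le_one h₀ h₁
    simp only [sign_weight hl hx, sign_weight hl hy]
    exact SignType.sign.monotone (monotone_A hl₁ hxy)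
  · refine (quasiconcaveOn_of_hasDerivAt_of_antitoneOn_sign (convex_Icc 0 1) hderiv
      fun x hx y hy hxy ↦ ?_).exists_sign_change hcont zero_le_one h₀ h₁
    simp only [sign_weight hl hx, sign_weight hl hy]
    exact SignType.sign.monotone (antitone_A hl hl₁ hxy)

end Trapezium

open Trapezium

theorem trapezium_one_dim_estimate
    (l : ℝ) (hl : 0 < l)
    (A : ℝ → ℝ)
    (hA : ∀ x, A x = (12 * (l ^ 2 - 1) * x - 6 * (l ^ 2 - 2 * l - 1)) / (l ^ 2 + 4 * l + 1))
    (g : ℝ → ℝ) (hgconv : ConvexOn ℝ (Set.Icc 0 1) g)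
    (hgcont : ContinuousOn g (Set.Icc 0 1)) :
    ∫ x in (0:ℝ)..1, (1 + (l - 1) * x) * A x * g x ≤ g 0 + l * g 1 := by
  obtain rfl : A = Trapezium.A l := funext hA
  obtain ⟨c, hc, hneg, hpos⟩ := exists_sign_change_weightPrimitive hl
  calc ∫ x in (0:ℝ)..1, weight l x * g x
      ≤ weightPrimitive l 1 * g 1 - weightPrimitive l 0 * g 0 :=
        hgconv.integral_deriv_mul_le_of_integral_eq_zero hgcont (hasDerivAt_weightPrimitive l)
          (continuous_weight l) hc hneg hpos (integral_weightPrimitive hl)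
    _ = g 0 + l * g 1 := by rw [weightPrimitive_zero, weightPrimitive_one hl]; ring
end

section
/- With A(x) = (12(l²−1)x − 6(l²−2l−1))/(l²+4l+1) and l > 0, equality ∫₀¹ (1+(l−1)x)A(x)g(x)dx = g(0) + l·g(1) for a convex g : [0,1] → ℝ holds if and only if g is affine. -/
open Filter Topology Set intervalIntegral MeasureTheory

/-!
The rule is exact on affine functions, so it suffices to treat `f = g - chord`, which is convex,
vanishes at `0` and `1`, and is therefore `≤ 0` on `[0, 1]`. With `w` the weight and
`c = min 1 l`, there is a quartic `V ≥ 0` on `[0, 1]` with `V(0) = V(1) = 0` and `V'' = 2c - w`.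
Summation by parts on a uniform grid moves the second differences of `f`, which are `≥ 0` by
convexity, onto `V`, and in the limit gives `∫ (2c - w) f ≥ 0`. Hence `∫ w f = 0` forces
`∫ f ≥ 0`, so `f ≡ 0`.
-/

theorem Finset.sum_range_mul_secondDiff_comm {R : Type*} [CommRing R] (a b : ℕ → R) (n : ℕ)
    (ha₀ : a 0 = 0) (hb₀ : b 0 = 0) (ha : a (n + 1) = 0) (hb : b (n + 1) = 0) :
    ∑ k ∈ Finset.range n, a (k + 1) * (b k + b (k + 2) - 2 * b (k + 1)) =
      ∑ k ∈ Finset.range n, b (k + 1) * (a k + a (k + 2) - 2 * a (k + 1)) := by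
  have h := Finset.sum_range_sub (fun k => a k * b (k + 1) - b k * a (k + 1)) n
  simp only [ha₀, hb₀, ha, hb, mul_zero, zero_mul, sub_zero] at h
  rw [← sub_eq_zero, ← Finset.sum_sub_distrib, ← h]
  exact Finset.sum_congr rfl fun k _ => by ring

theorem ConvexOn.two_mul_le_add {s : Set ℝ} {f : ℝ → ℝ} (hf : ConvexOn ℝ s f) {x δ : ℝ}
    (h₁ : x - δ ∈ s) (h₂ : x + δ ∈ s) : 2 * f x ≤ f (x - δ) + f (x + δ) := by
  have hmid := hf.2 h₁ h₂ (by norm_num : (0 : ℝ) ≤ 1 / 2) (by norm_num : (0 : ℝ) ≤ 1 / 2)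
    (by norm_num)
  simp only [smul_eq_mul] at hmid
  rw [show 1 / 2 * (x - δ) + 1 / 2 * (x + δ) = x by ring] at hmid
  linarith

noncomputable def rightRiemannSum (F : ℝ → ℝ) (N : ℕ) : ℝ :=
  (∑ k ∈ Finset.range N, F ((k + 1) / N)) / N

theorem abs_integral_sub_mul_right_le {F : ℝ → ℝ} {a b C : ℝ} (hab : a ≤ b)
    (hF : IntervalIntegrable F volume a b) (hC : ∀ x ∈ Icc a b, |F x - F b| ≤ C) :
    |(∫ x in a..b, F x) - (b - a) * F b| ≤ C * (b - a) := by
  have h := norm_integral_le_of_norm_le_const (a := a) (b := b) (f := fun x => F x - F b)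
    fun x hx => hC x (uIoc_subset_uIcc.trans (uIcc_of_le hab).subset hx)
  rwa [integral_sub hF intervalIntegrable_const, intervalIntegral.integral_const, smul_eq_mul,
    Real.norm_eq_abs, abs_of_nonneg (sub_nonneg.2 hab)] at h

theorem tendsto_rightRiemannSum {F : ℝ → ℝ} (hF : ContinuousOn F (Icc 0 1)) :
    Tendsto (rightRiemannSum F) atTop (𝓝 (∫ x in (0 : ℝ)..1, F x)) := by
  rw [Metric.tendsto_atTop]
  intro ε hε
  obtain ⟨η, hη, hFη⟩ := Metric.uniformContinuousOn_iff_le.1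
    (isCompact_Icc.uniformContinuousOn_of_continuous hF) (ε / 2) (half_pos hε)
  obtain ⟨N₀, hN₀⟩ := exists_nat_one_div_lt hη
  refine ⟨N₀ + 1, fun N hN₀N => ?_⟩
  have hN : (0 : ℝ) < N := by exact_mod_cast (Nat.succ_pos N₀).trans_le hN₀N
  have hmesh : 1 / (N : ℝ) ≤ η := by
    refine le_trans (one_div_le_one_div_of_le (by positivity) ?_) hN₀.le
    exact_mod_cast hN₀N
  set a : ℕ → ℝ := fun k => k / N
  have ha : ∀ k ≤ N, a k ∈ Icc 0 1 := fun k hk =>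
    ⟨by positivity, div_le_one_of_le₀ (by exact_mod_cast hk) hN.le⟩
  have hint : ∀ k < N, IntervalIntegrable F volume (a k) (a (k + 1)) := fun k hk =>
    (hF.mono (uIcc_subset_Icc (ha k hk.le) (ha (k + 1) hk))).intervalIntegrable
  have hpiece : ∀ k < N,
      |(∫ x in a k..a (k + 1), F x) - 1 / N * F (a (k + 1))| ≤ ε / 2 * (1 / N) := by
    intro k hk
    have hstep : a (k + 1) - a k = 1 / N := by simp only [a]; push_cast; ring
    rw [← hstep]
    refine abs_integral_sub_mul_right_le (by linarith [one_div_pos.2 hN]) (hint k hk)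
      fun x hx => ?_
    rw [← Real.dist_eq]
    refine hFη x (Icc_subset_Icc (ha k hk.le).1 (ha (k + 1) hk).2 hx) _ (ha (k + 1) hk) ?_
    rw [Real.dist_eq, abs_of_nonpos (by linarith [hx.2])]
    linarith [hx.1]
  have hsum : rightRiemannSum F N = ∑ k ∈ Finset.range N, 1 / N * F (a (k + 1)) := by
    rw [rightRiemannSum, Finset.sum_div]
    refine Finset.sum_congr rfl fun k _ => ?_
    simp only [a]
    push_cast
    ring
  have hintegral : ∫ x in (0 : ℝ)..1, F x = ∑ k ∈ Finset.range N, ∫ x in a k..a (k + 1), F x := by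
    rw [sum_integral_adjacent_intervals hint]
    simp [a, hN.ne']
  rw [Real.dist_eq, abs_sub_comm, hsum, hintegral, ← Finset.sum_sub_distrib]
  calc _ ≤ ∑ k ∈ Finset.range N, |(∫ x in a k..a (k + 1), F x) - 1 / N * F (a (k + 1))| :=
        Finset.abs_sum_le_sum_abs _ _
    _ ≤ ∑ k ∈ Finset.range N, ε / 2 * (1 / N) :=
        Finset.sum_le_sum fun k hk => hpiece k (Finset.mem_range.1 hk)
    _ = ε / 2 := by simp only [Finset.sum_const, Finset.card_range, nsmul_eq_mul]; field_simp
    _ < ε := half_lt_self hε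

section SecondDifference

variable {V W h : ℝ → ℝ} {M : ℝ}

/-- Summation by parts moves the second differences from `h`, where they are `≥ 0` by convexity,
onto `V`, where they are `δ² W + δ⁴ M`. -/
theorem ConvexOn.rightRiemannSum_mul_add_nonneg (hh : ConvexOn ℝ (Icc 0 1) h)
    (hh₀ : h 0 = 0) (hh₁ : h 1 = 0) (hV : ∀ t ∈ Icc (0 : ℝ) 1, 0 ≤ V t) (hV₀ : V 0 = 0)
    (hV₁ : V 1 = 0) (hVW : ∀ y δ, V (y - δ) + V (y + δ) - 2 * V y = δ ^ 2 * W y + δ ^ 4 * M)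
    (n : ℕ) :
    0 ≤ rightRiemannSum (fun x => W x * h x) (n + 1) +
      M * (1 / ((n : ℝ) + 1)) ^ 2 * rightRiemannSum h (n + 1) := by
  set δ : ℝ := 1 / ((n : ℝ) + 1)
  have hδ : 0 < δ := by positivity
  set x : ℕ → ℝ := fun k => k * δ
  have hx : ∀ k ≤ n + 1, x k ∈ Icc 0 1 := fun k hk => by
    refine ⟨by positivity, ?_⟩
    simp only [x, δ]
    rw [mul_one_div, div_le_one (by positivity)]
    exact_mod_cast hk
  have hxsucc : ∀ k, x (k + 1) = x k + δ := fun k => by simp only [x]; push_cast; ring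
  have hx₀ : x 0 = 0 := by simp [x]
  have hx₁ : x (n + 1) = 1 := by simp only [x, δ]; push_cast; field_simp
  have hsecond : 0 ≤ ∑ k ∈ Finset.range n,
      V (x (k + 1)) * (h (x k) + h (x (k + 2)) - 2 * h (x (k + 1))) := by
    refine Finset.sum_nonneg fun k hk => ?_
    have hk := Finset.mem_range.1 hk
    have hprev : x k = x (k + 1) - δ := by rw [hxsucc]; ring
    have hmid := hh.two_mul_le_add (hprev ▸ hx k (by omega))
      (hxsucc (k + 1) ▸ hx (k + 2) (by omega))
    rw [hprev, hxsucc (k + 1)]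
    exact mul_nonneg (hV _ (hx (k + 1) (by omega))) (by linarith)
  rw [Finset.sum_range_mul_secondDiff_comm (fun k => V (x k)) (fun k => h (x k)) n
    (by simp only [hx₀, hV₀]) (by simp only [hx₀, hh₀]) (by simp only [hx₁, hV₁])
    (by simp only [hx₁, hh₁])] at hsecond
  have hR : ∀ F : ℝ → ℝ, F 1 = 0 →
      rightRiemannSum F (n + 1) = δ * ∑ k ∈ Finset.range n, F (x (k + 1)) := by
    intro F hF₁
    rw [rightRiemannSum, Finset.sum_range_succ,
      show ((n : ℝ) + 1) / ((n + 1 : ℕ) : ℝ) = 1 by push_cast; field_simp, hF₁, add_zero,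
      Finset.mul_sum, Finset.sum_div]
    refine Finset.sum_congr rfl fun k _ => ?_
    simp only [x, δ]
    push_cast
    field_simp
  have hscaled : δ ^ 2 * (rightRiemannSum (fun x => W x * h x) (n + 1) +
      M * δ ^ 2 * rightRiemannSum h (n + 1)) = δ * ∑ k ∈ Finset.range n,
        h (x (k + 1)) * (V (x k) + V (x (k + 2)) - 2 * V (x (k + 1))) := by
    rw [hR _ (by simp only [hh₁, mul_zero]), hR _ hh₁, Finset.mul_sum, Finset.mul_sum,
      Finset.mul_sum, Finset.mul_sum, ← Finset.sum_add_distrib, Finset.mul_sum]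
    refine Finset.sum_congr rfl fun k _ => ?_
    have hprev : x k = x (k + 1) - δ := by rw [hxsucc]; ring
    rw [hprev, hxsucc (k + 1), hVW]
    ring
  exact (mul_nonneg_iff_of_pos_left (pow_pos hδ 2)).1 (hscaled ▸ mul_nonneg hδ.le hsecond)

theorem ConvexOn.integral_mul_nonneg_of_secondDiff (hh : ConvexOn ℝ (Icc 0 1) h)
    (hhc : ContinuousOn h (Icc 0 1)) (hh₀ : h 0 = 0) (hh₁ : h 1 = 0)
    (hV : ∀ t ∈ Icc (0 : ℝ) 1, 0 ≤ V t) (hV₀ : V 0 = 0) (hV₁ : V 1 = 0)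
    (hVW : ∀ y δ, V (y - δ) + V (y + δ) - 2 * V y = δ ^ 2 * W y + δ ^ 4 * M)
    (hW : ContinuousOn W (Icc 0 1)) :
    0 ≤ ∫ x in (0 : ℝ)..1, W x * h x := by
  have hlim : Tendsto (fun n : ℕ => rightRiemannSum (fun x => W x * h x) (n + 1) +
      M * (1 / ((n : ℝ) + 1)) ^ 2 * rightRiemannSum h (n + 1)) atTop
      (𝓝 ((∫ x in (0 : ℝ)..1, W x * h x) + M * 0 ^ 2 * ∫ x in (0 : ℝ)..1, h x)) :=
    ((tendsto_rightRiemannSum (hW.mul hhc)).comp (tendsto_add_atTop_nat 1)).add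
      ((tendsto_const_nhds.mul (tendsto_one_div_add_atTop_nhds_zero_nat.pow 2)).mul
        ((tendsto_rightRiemannSum hhc).comp (tendsto_add_atTop_nat 1)))
  simpa using ge_of_tendsto' hlim (hh.rightRiemannSum_mul_add_nonneg hh₀ hh₁ hV hV₀ hV₁ hVW)

end SecondDifference

theorem integral_cubic (c₀ c₁ c₂ c₃ : ℝ) :
    ∫ x in (0 : ℝ)..1, c₃ * x ^ 3 + c₂ * x ^ 2 + c₁ * x + c₀ = c₃ / 4 + c₂ / 3 + c₁ / 2 + c₀ := by
  rw [intervalIntegral.integral_add, intervalIntegral.integral_add, intervalIntegral.integral_add,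
    intervalIntegral.integral_const_mul, intervalIntegral.integral_const_mul,
    intervalIntegral.integral_const_mul c₁ fun x => x]
  · norm_num
    ring
  all_goals exact (by fun_prop : Continuous _).intervalIntegrable _ _

noncomputable def trapeziumWeight (l x : ℝ) : ℝ :=
  (1 + (l - 1) * x) * ((12 * (l ^ 2 - 1) * x - 6 * (l ^ 2 - 2 * l - 1)) / (l ^ 2 + 4 * l + 1))

/-- The quartic `V` with `V(0) = V(1) = 0` and `V'' = 2c - trapeziumWeight l`; being quartic, its
second differences are exactly `δ² V'' + δ⁴ V'''' / 12`. -/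
noncomputable def trapeziumKernel (l c t : ℝ) : ℝ :=
  t * (1 - t) *
    (((l - 1) ^ 2 * (l + 1) * t ^ 2 + 2 * (2 * l + 1) * (l - 1) * t) / (l ^ 2 + 4 * l + 1) + 1 - c)

section

variable {l : ℝ}

theorem integral_trapeziumWeight_mul_affine (hl : 0 < l) (a b : ℝ) :
    ∫ x in (0 : ℝ)..1, trapeziumWeight l x * (a * x + b) = b + l * (a + b) := by
  have hcubic : ∀ x, trapeziumWeight l x * (a * x + b) =
      12 * a * (l - 1) ^ 2 * (l + 1) / (l ^ 2 + 4 * l + 1) * x ^ 3 +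
      (12 * b * (l - 1) ^ 2 * (l + 1) - 6 * a * (l ^ 3 - 5 * l ^ 2 + l + 3)) /
        (l ^ 2 + 4 * l + 1) * x ^ 2 +
      (-6 * b * (l ^ 3 - 5 * l ^ 2 + l + 3) - 6 * a * (l ^ 2 - 2 * l - 1)) /
        (l ^ 2 + 4 * l + 1) * x +
      (-6 * b * (l ^ 2 - 2 * l - 1)) / (l ^ 2 + 4 * l + 1) := fun x => by
    rw [trapeziumWeight]
    field_simp
    ring
  simp only [hcubic, integral_cubic]
  field_simp
  ring

theorem trapeziumKernel_secondDiff (hl : 0 < l) (c y δ : ℝ) :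
    trapeziumKernel l c (y - δ) + trapeziumKernel l c (y + δ) - 2 * trapeziumKernel l c y =
      δ ^ 2 * (2 * c - trapeziumWeight l y) +
        δ ^ 4 * (-2 * (l - 1) ^ 2 * (l + 1) / (l ^ 2 + 4 * l + 1)) := by
  simp only [trapeziumKernel, trapeziumWeight]
  field_simp
  ring

theorem trapeziumKernel_nonneg (hl : 0 < l) {t : ℝ} (ht : t ∈ Icc (0 : ℝ) 1) :
    0 ≤ trapeziumKernel l (min 1 l) t := by
  refine mul_nonneg (mul_nonneg ht.1 (sub_nonneg.2 ht.2)) ?_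
  obtain ⟨ht₀, ht₁⟩ := ht
  rcases le_total 1 l with hl₁ | hl₁
  · rw [min_eq_left hl₁, add_sub_cancel_right]
    have hfactor : (l - 1) ^ 2 * (l + 1) * t ^ 2 + 2 * (2 * l + 1) * (l - 1) * t =
        (l - 1) * t * ((l - 1) * (l + 1) * t + 2 * (2 * l + 1)) := by ring
    rw [hfactor]
    have hl₁' := sub_nonneg.2 hl₁
    positivity
  · rw [min_eq_right hl₁]
    have hfactor : ((l - 1) ^ 2 * (l + 1) * t ^ 2 + 2 * (2 * l + 1) * (l - 1) * t) /
        (l ^ 2 + 4 * l + 1) + 1 - l =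
          (1 - t) * (1 - l) * ((l ^ 2 - 1) * t + l ^ 2 + 4 * l + 1) / (l ^ 2 + 4 * l + 1) := by
      field_simp
      ring
    rw [hfactor]
    have hl₁' := sub_nonneg.2 hl₁
    have ht₁' := sub_nonneg.2 ht₁
    have hlin : 0 ≤ (l ^ 2 - 1) * t + l ^ 2 + 4 * l + 1 := by nlinarith
    positivity

end

theorem ConvexOn.eqOn_zero_of_integral_nonneg {a b : ℝ} {h : ℝ → ℝ}
    (hh : ConvexOn ℝ (Icc a b) h) (hhc : ContinuousOn h (Icc a b)) (ha : h a = 0) (hb : h b = 0)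
    (hint : 0 ≤ ∫ x in a..b, h x) : EqOn h 0 (Icc a b) := by
  have hle : ∀ x ∈ Icc a b, h x ≤ 0 := fun x hx => by
    have hab := hx.1.trans hx.2
    simpa [ha, hb] using hh.le_on_segment (left_mem_Icc.2 hab) (right_mem_Icc.2 hab)
      (by rwa [segment_eq_Icc hab])
  intro x hx
  by_contra hne
  have hlt : h x < 0 := (hle x hx).lt_of_ne hne
  have hax : a < x := hx.1.lt_of_ne fun hax => hne (hax ▸ ha)
  have hpos := integral_pos (hax.trans_le hx.2) hhc.neg
    (fun y hy => neg_nonneg.2 (hle y (Ioc_subset_Icc_self hy))) ⟨x, hx, neg_pos.2 hlt⟩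
  rw [Pi.neg_def, intervalIntegral.integral_neg] at hpos
  linarith

theorem ConvexOn.integral_trapeziumWeight_mul_le {l : ℝ} (hl : 0 < l) {f : ℝ → ℝ}
    (hf : ConvexOn ℝ (Icc 0 1) f) (hfc : ContinuousOn f (Icc 0 1)) (hf₀ : f 0 = 0)
    (hf₁ : f 1 = 0) :
    ∫ x in (0 : ℝ)..1, trapeziumWeight l x * f x ≤ 2 * min 1 l * ∫ x in (0 : ℝ)..1, f x := by
  have hw : Continuous (trapeziumWeight l) := by unfold trapeziumWeight; fun_prop
  have hnonneg := hf.integral_mul_nonneg_of_secondDiff hfc hf₀ hf₁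
    (fun t => trapeziumKernel_nonneg hl) (by simp [trapeziumKernel]) (by simp [trapeziumKernel])
    (trapeziumKernel_secondDiff hl _) (by fun_prop : Continuous _).continuousOn
  rw [intervalIntegral.integral_congr
    (g := fun x => 2 * min 1 l * f x - trapeziumWeight l x * f x) (fun x _ => sub_mul _ _ _),
    intervalIntegral.integral_sub, intervalIntegral.integral_const_mul] at hnonneg
  · linarith
  · exact (hfc.intervalIntegrable_of_Icc zero_le_one).const_mul _
  · exact (hw.continuousOn.mul hfc).intervalIntegrable_of_Icc zero_le_one

theorem ConvexOn.eqOn_chord_of_integral_trapeziumWeight_mul_eq {l : ℝ} (hl : 0 < l)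
    {g : ℝ → ℝ} (hg : ConvexOn ℝ (Icc 0 1) g) (hgc : ContinuousOn g (Icc 0 1))
    (heq : ∫ x in (0 : ℝ)..1, trapeziumWeight l x * g x = g 0 + l * g 1) :
    EqOn g (fun x => (g 1 - g 0) * x + g 0) (Icc 0 1) := by
  set p : ℝ → ℝ := fun x => (g 1 - g 0) * x + g 0
  have hpc : Continuous p := by fun_prop
  have hwc : Continuous (trapeziumWeight l) := by unfold trapeziumWeight; fun_prop
  have hpconc : ConcaveOn ℝ (Icc 0 1) p := ⟨convex_Icc 0 1, fun x _ y _ a b _ _ hab =>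
    le_of_eq <| by simp only [p, smul_eq_mul]; linear_combination g 0 * hab⟩
  have hfconv := hg.sub hpconc
  have hfc : ContinuousOn (g - p) (Icc 0 1) := hgc.sub hpc.continuousOn
  have hwf : ∫ x in (0 : ℝ)..1, trapeziumWeight l x * (g - p) x = 0 := by
    simp only [Pi.sub_apply, mul_sub]
    rw [intervalIntegral.integral_sub, heq, integral_trapeziumWeight_mul_affine hl]
    · ring
    · exact (hwc.continuousOn.mul hgc).intervalIntegrable_of_Icc zero_le_one
    · exact (hwc.mul hpc).intervalIntegrable _ _
  have hint : 0 ≤ ∫ x in (0 : ℝ)..1, (g - p) x := by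
    have hle := hfconv.integral_trapeziumWeight_mul_le hl hfc (by simp [p]) (by simp [p])
    rw [hwf] at hle
    exact (mul_nonneg_iff_of_pos_left (by positivity)).1 hle
  exact fun x hx =>
    sub_eq_zero.1 (hfconv.eqOn_zero_of_integral_nonneg hfc (by simp [p]) (by simp [p]) hint hx)

theorem trapezium_one_dim_equality_iff_affine
    (l : ℝ) (hl : 0 < l)
    (A : ℝ → ℝ)
    (hA : ∀ x, A x = (12 * (l ^ 2 - 1) * x - 6 * (l ^ 2 - 2 * l - 1)) / (l ^ 2 + 4 * l + 1))
    (g : ℝ → ℝ) (hgconv : ConvexOn ℝ (Set.Icc 0 1) g)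
    (hgcont : ContinuousOn g (Set.Icc 0 1)) :
    (∫ x in (0:ℝ)..1, (1 + (l - 1) * x) * A x * g x = g 0 + l * g 1) ↔
      ∃ a b : ℝ, ∀ x ∈ Set.Icc (0:ℝ) 1, g x = a * x + b := by
  have hw : ∀ x, (1 + (l - 1) * x) * A x = trapeziumWeight l x := fun x => by
    rw [hA, trapeziumWeight]
  simp only [hw]
  constructor
  · exact fun heq => ⟨g 1 - g 0, g 0,
      hgconv.eqOn_chord_of_integral_trapeziumWeight_mul_eq hl hgcont heq⟩
  · rintro ⟨a, b, hab⟩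
    rw [intervalIntegral.integral_congr (g := fun x => trapeziumWeight l x * (a * x + b))
      fun x hx => by rw [hab x (by rwa [uIcc_of_le zero_le_one] at hx)],
      integral_trapeziumWeight_mul_affine hl, hab 0 (by simp), hab 1 (by simp)]
    ring
end

section
/- For l > 0 and A(x) = (12(l²−1)x − 6(l²−2l−1))/(l²+4l+1), and every t ∈ [0,1]: ∫_t¹ (1+(l−1)x)·A(x)·(x−t) dx ≤ l(1−t), with equality only at t = 0 and t = 1. -/
/-!
Write `D = l² + 4l + 1 > 0`. The integrand is a cubic polynomial in `x`, so the integral is an explicit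
quartic in `t`, and `l (1 - t)` minus it factors as `t (1 - t) R(t) / D` with `R` a quadratic in `t`.
On `[0, 1]` we have `R(t) = (l + 1)((l - 1)t + 1)² + l((l + 3)(1 - t) + (3l + 1)t) > 0`, which gives
the inequality and shows that equality forces `t (1 - t) = 0`.
-/

open intervalIntegral

theorem integral_cubic_s10 (a b c d s u : ℝ) :
    ∫ x in s..u, (a * x ^ 3 + b * x ^ 2 + c * x + d) =
      (a * u ^ 4 / 4 + b * u ^ 3 / 3 + c * u ^ 2 / 2 + d * u) -
        (a * s ^ 4 / 4 + b * s ^ 3 / 3 + c * s ^ 2 / 2 + d * s) := by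
  rw [integral_add, integral_add, integral_add]
  all_goals try exact (by fun_prop : Continuous _).intervalIntegrable _ _
  simp only [integral_const_mul, integral_const_mul c (fun x => x), integral_pow, integral_id,
    integral_const, smul_eq_mul]
  ring

def trapeziumGapFactor (l t : ℝ) : ℝ :=
  (l - 1) ^ 2 * (l + 1) * t ^ 2 + 2 * (2 * l + 1) * (l - 1) * t + (l ^ 2 + 4 * l + 1)

theorem trapeziumGapFactor_pos {l t : ℝ} (hl : 0 < l) (ht0 : 0 ≤ t) (ht1 : t ≤ 1) :
    0 < trapeziumGapFactor l t := by
  have hsos : trapeziumGapFactor l t =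
      (l + 1) * ((l - 1) * t + 1) ^ 2 + l * ((l + 3) * (1 - t) + (3 * l + 1) * t) := by
    unfold trapeziumGapFactor; ring
  have hconv : 0 < (l + 3) * (1 - t) + (3 * l + 1) * t := by
    nlinarith [mul_nonneg (by linarith : (0 : ℝ) ≤ l + 3) (sub_nonneg.2 ht1),
      mul_nonneg (by linarith : (0 : ℝ) ≤ 3 * l + 1) ht0]
  rw [hsos]
  exact add_pos_of_nonneg_of_pos (by positivity) (mul_pos hl hconv)

theorem integral_trapezium_eq {l : ℝ} (hD : l ^ 2 + 4 * l + 1 ≠ 0) (t : ℝ) :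
    ∫ x in t..1, (1 + (l - 1) * x) *
        ((12 * (l ^ 2 - 1) * x - 6 * (l ^ 2 - 2 * l - 1)) / (l ^ 2 + 4 * l + 1)) * (x - t) =
      l * (1 - t) - t * (1 - t) * trapeziumGapFactor l t / (l ^ 2 + 4 * l + 1) := by
  set α := 12 * (l ^ 2 - 1)
  set β := -(6 * (l ^ 2 - 2 * l - 1))
  set D := l ^ 2 + 4 * l + 1
  calc _ = ∫ x in t..1, ((l - 1) * α / D * x ^ 3 + (α + (l - 1) * β - (l - 1) * α * t) / D * x ^ 2
          + (β - (α + (l - 1) * β) * t) / D * x + (-(β * t) / D)) := by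
        congr 1; funext x; field_simp; ring
    _ = _ := by
        rw [integral_cubic_s10]; unfold trapeziumGapFactor; field_simp; ring

theorem trapezium_quartic_estimate
    (l : ℝ) (hl : 0 < l)
    (A : ℝ → ℝ)
    (hA : ∀ x, A x = (12 * (l ^ 2 - 1) * x - 6 * (l ^ 2 - 2 * l - 1)) / (l ^ 2 + 4 * l + 1)) :
    ∀ t ∈ Set.Icc (0:ℝ) 1,
      (∫ x in t..1, (1 + (l - 1) * x) * A x * (x - t)) ≤ l * (1 - t) ∧
      ((∫ x in t..1, (1 + (l - 1) * x) * A x * (x - t)) = l * (1 - t) → t = 0 ∨ t = 1) := by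
  rintro t ⟨ht0, ht1⟩
  have hD : 0 < l ^ 2 + 4 * l + 1 := by positivity
  have hR := trapeziumGapFactor_pos hl ht0 ht1
  rw [show A = _ from funext hA, integral_trapezium_eq hD.ne']
  have hgap : 0 ≤ t * (1 - t) * trapeziumGapFactor l t / (l ^ 2 + 4 * l + 1) :=
    div_nonneg (mul_nonneg (mul_nonneg ht0 (sub_nonneg.2 ht1)) hR.le) hD.le
  refine ⟨sub_le_self _ hgap, fun heq => ?_⟩
  have hroots : t * (1 - t) = 0 := by simpa [hR.ne', hD.ne'] using sub_eq_self.1 heq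
  rcases mul_eq_zero.1 hroots with ht | ht
  · exact Or.inl ht
  · exact Or.inr (by linarith)
end

section
/- Let P ⊂ ℝⁿ be a compact convex polytope containing 0 in its interior, and let Π be the L²(P)-orthogonal projection onto the (finite-dimensional) space of affine functions. Then there is a constant C > 0 such that every nonnegative continuous convex function f on P with f(0) = 0 satisfies ‖f‖_{L²(P)} ≤ C·‖f − Π(f)‖_{L²(P)}. -/
/-!
Write `D` and `F` for the `L²(P)` norms of `f - g` and `f`. By the mean value property of affine
functions on balls, `g y` is the average of `f` over a ball `B ⊆ P` around `y` up to an error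
`D / √(vol B)`. As `f ≥ 0`, this bounds `g` from below on a ball around `0`. As `f` is convex with
`f 0 = 0`, its average over `B(0, cρ)` is at most `c` times its average over `B(0, ρ)`, which is at
most `F / √(vol B(0, ρ))`; this bounds `g 0` from above by `O(c F) + O_c(D)`. An affine function
bounded below on a ball and above at its centre is bounded on all of `P`, so
`‖g‖ ≤ K c F + O_c(D)` with `K` independent of `c`. Finally `f - g ⊥ g` gives `F ≤ D + ‖g‖`,
and for `c` small enough the `F`-term is absorbed into the left-hand side.
-/

open MeasureTheory Metric
open scoped Pointwise

theorem abs_setAverage_le_sqrt_integral_sq {α : Type*} [MeasurableSpace α] {μ : Measure α}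
    {h : α → ℝ} {s t : Set α} (hts : t ⊆ s) (ht₀ : μ t ≠ 0) (ht : μ t ≠ ⊤)
    (hh : IntegrableOn h t μ) (hh2 : IntegrableOn (fun x ↦ h x ^ 2) s μ) :
    |⨍ x in t, h x ∂μ| ≤ √(∫ x in s, h x ^ 2 ∂μ) / √(μ.real t) := by
  have jensen : (⨍ x in t, h x ∂μ) ^ 2 ≤ ⨍ x in t, h x ^ 2 ∂μ :=
    (Even.convexOn_pow even_two).map_set_average_le (continuous_pow 2).continuousOn
      isClosed_univ ht₀ ht (by simp) hh (hh2.mono_set hts)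
  have mono : ⨍ x in t, h x ^ 2 ∂μ ≤ (∫ x in s, h x ^ 2 ∂μ) / μ.real t := by
    rw [setAverage_eq, smul_eq_mul, inv_mul_eq_div]
    exact div_le_div_of_nonneg_right
      (setIntegral_mono_set hh2 (ae_of_all _ fun _ ↦ sq_nonneg _) hts.eventuallyLE)
      measureReal_nonneg
  rw [← Real.sqrt_div' _ measureReal_nonneg]
  exact Real.abs_le_sqrt (jensen.trans mono)

variable {E : Type*} [NormedAddCommGroup E] [NormedSpace ℝ E] [FiniteDimensional ℝ E]
  [MeasurableSpace E] {μ : Measure E} [μ.IsAddHaarMeasure]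

theorem measureReal_closedBall_pos (y : E) {ρ : ℝ} (hρ : 0 < ρ) : 0 < μ.real (closedBall y ρ) :=
  ENNReal.toReal_pos (measure_closedBall_pos μ y hρ).ne' measure_closedBall_lt_top.ne

variable [BorelSpace E]

theorem AffineMap.setAverage_closedBall (g : E →ᵃ[ℝ] ℝ) (y : E) {ρ : ℝ} (hρ : 0 < ρ) :
    ⨍ x in closedBall y ρ, g x ∂μ = g y := by
  set B := closedBall y ρ
  have hreflect : ∀ x, g ((2 : ℝ) • y - x) = 2 * g y - g x := by
    intro x
    rw [AffineMap.decomp]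
    simp only [Pi.add_apply, map_sub, map_smul, smul_eq_mul]
    ring
  have hpre : (fun x ↦ (2 : ℝ) • y - x) ⁻¹' B = B := by
    ext x
    simp only [B, Set.mem_preimage, mem_closedBall, dist_eq_norm]
    rw [two_smul, add_sub_assoc, add_sub_cancel_left, norm_sub_rev]
  have hgB : IntegrableOn g B μ :=
    g.continuous_of_finiteDimensional.continuousOn.integrableOn_compact (isCompact_closedBall y ρ)
  have hcB : IntegrableOn (fun _ ↦ 2 * g y) B μ := integrableOn_const measure_closedBall_lt_top.ne
  have hI : ∫ x in B, g x ∂μ = 2 * μ.real B * g y - ∫ x in B, g x ∂μ := calc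
    ∫ x in B, g x ∂μ = ∫ x in (fun x ↦ (2 : ℝ) • y - x) ⁻¹' B, g ((2 : ℝ) • y - x) ∂μ :=
      ((μ.measurePreserving_sub_left _).setIntegral_preimage_emb
        (measurableEmbedding_subLeft _) g B).symm
    _ = ∫ x in B, (2 * g y - g x) ∂μ := by simp_rw [hpre, hreflect]
    _ = 2 * μ.real B * g y - ∫ x in B, g x ∂μ := by
      rw [integral_sub hcB hgB, setIntegral_const, smul_eq_mul]
      ring
  rw [setAverage_eq, smul_eq_mul, inv_mul_eq_div, div_eq_iff (measureReal_closedBall_pos y hρ).ne']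
  linarith

theorem ConvexOn.setAverage_closedBall_mul_le {s : Set E} {f : E → ℝ} (hf : ConvexOn ℝ s f)
    (hfc : ContinuousOn f s) (hf0 : f 0 = 0) {ρ c : ℝ} (hρ : 0 < ρ) (hs : closedBall 0 ρ ⊆ s)
    (hc₀ : 0 < c) (hc₁ : c ≤ 1) :
    ⨍ x in closedBall (0 : E) (c * ρ), f x ∂μ ≤ c * ⨍ x in closedBall (0 : E) ρ, f x ∂μ := by
  set B := closedBall (0 : E) ρ
  have hscale : c • B = closedBall 0 (c * ρ) := by
    rw [smul_closedBall c 0 hρ.le, smul_zero, Real.norm_eq_abs, abs_of_pos hc₀]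
  have hmaps : Set.MapsTo (c • ·) B s := fun x hx ↦
    hs <| closedBall_subset_closedBall (mul_le_of_le_one_left hρ.le hc₁) <|
      hscale ▸ Set.smul_mem_smul_set hx
  have hpoint : ∀ x ∈ B, f (c • x) ≤ c * f x := fun x hx ↦ by
    simpa [hf0] using
      hf.2 (hs hx) (hs (mem_closedBall_self hρ.le)) hc₀.le (sub_nonneg.2 hc₁) (add_sub_cancel c 1)
  have hfcB : IntegrableOn (fun x ↦ f (c • x)) B μ :=
    (hfc.comp (continuous_const_smul c).continuousOn hmaps).integrableOn_compact
      (isCompact_closedBall _ _)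
  have hfB : IntegrableOn f B μ := (hfc.mono hs).integrableOn_compact (isCompact_closedBall _ _)
  have hvol : μ.real (c • B) = c ^ Module.finrank ℝ E * μ.real B := by
    rw [measureReal_def, Measure.addHaar_smul, ENNReal.toReal_mul, abs_pow, abs_of_pos hc₀,
      ENNReal.toReal_ofReal (by positivity), measureReal_def]
  have hd : (0 : ℝ) < c ^ Module.finrank ℝ E := pow_pos hc₀ _
  have hchange : ∫ x in c • B, f x ∂μ = c ^ Module.finrank ℝ E * ∫ x in B, f (c • x) ∂μ := by
    rw [Measure.setIntegral_comp_smul_of_pos μ f B hc₀, smul_eq_mul, mul_inv_cancel_left₀ hd.ne']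
  have hmono : ∫ x in B, f (c • x) ∂μ ≤ c * ∫ x in B, f x ∂μ := by
    rw [← integral_const_mul]
    exact setIntegral_mono_on hfcB (hfB.const_mul c) measurableSet_closedBall hpoint
  rw [setAverage_eq, setAverage_eq, ← hscale, hvol, hchange, smul_eq_mul, smul_eq_mul, mul_inv,
    mul_assoc, mul_left_comm _ (c ^ _), inv_mul_cancel_left₀ hd.ne', mul_left_comm c]
  exact mul_le_mul_of_nonneg_left hmono (inv_nonneg.2 measureReal_nonneg)

theorem AffineMap.abs_setAverage_sub_le (g : E →ᵃ[ℝ] ℝ) {P : Set E} {f : E → ℝ} (hP : IsCompact P)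
    (hfc : ContinuousOn f P) {y : E} {ρ : ℝ} (hρ : 0 < ρ) (hB : closedBall y ρ ⊆ P) :
    |⨍ x in closedBall y ρ, f x ∂μ - g y| ≤
      √(∫ x in P, (f x - g x) ^ 2 ∂μ) / √(μ.real (closedBall (0 : E) ρ)) := by
  have hgc : ContinuousOn g P := g.continuous_of_finiteDimensional.continuousOn
  have hfB : IntegrableOn f (closedBall y ρ) μ :=
    (hfc.mono hB).integrableOn_compact (isCompact_closedBall _ _)
  have hgB : IntegrableOn g (closedBall y ρ) μ :=
    (hgc.mono hB).integrableOn_compact (isCompact_closedBall _ _)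
  rw [← g.setAverage_closedBall (μ := μ) y hρ, setAverage_eq, setAverage_eq, ← smul_sub,
    ← integral_sub hfB hgB, ← setAverage_eq, ← μ.addHaar_real_closedBall_center y]
  exact abs_setAverage_le_sqrt_integral_sq hB (measure_closedBall_pos μ y hρ).ne'
    measure_closedBall_lt_top.ne (hfB.sub hgB) (((hfc.sub hgc).pow 2).integrableOn_compact hP)

theorem AffineMap.abs_le_of_forall_closedBall {V : Type*} [NormedAddCommGroup V]
    [NormedSpace ℝ V] (g : V →ᵃ[ℝ] ℝ) {r q u R : ℝ} (hr : 0 < r) (hq : 0 ≤ q) (hu : 0 ≤ u)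
    (hlow : ∀ y ∈ closedBall (0 : V) r, -q ≤ g y) (hup : g 0 ≤ u) {x : V} (hx : ‖x‖ ≤ R) :
    |g x| ≤ (1 + R / r) * (q + u) := by
  have hlinear : ∀ w, g.linear w = g w - g 0 := fun w ↦ by simpa using g.linearMap_vsub w 0
  have hg0 : -q ≤ g 0 := hlow 0 (mem_closedBall_self hr.le)
  have hball : ∀ z ∈ closedBall (0 : V) r, ‖g.linear z‖ ≤ q + u := by
    intro z hz
    have h₁ := hlow z hz
    have h₂ := hlow (-z) (by simpa using hz)
    have h₃ := hlinear (-z)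
    rw [map_neg, hlinear] at h₃
    rw [Real.norm_eq_abs, abs_le, hlinear]
    constructor <;> linarith
  have hx' : |g.linear x| ≤ (q + u) / r * R := by
    have := g.linear.bound_of_ball_bound' hr (q + u) hball x
    rw [Real.norm_eq_abs] at this
    exact this.trans (mul_le_mul_of_nonneg_left hx (by positivity))
  calc |g x| = |g.linear x + g 0| := by rw [hlinear, sub_add_cancel]
    _ ≤ |g.linear x| + |g 0| := abs_add_le _ _
    _ ≤ (q + u) / r * R + (q + u) := add_le_add hx' (abs_le.2 ⟨by linarith, by linarith⟩)
    _ = (1 + R / r) * (q + u) := by ring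

theorem sqrt_integral_sq_le_add_of_integral_mul_eq_zero {α : Type*} [MeasurableSpace α]
    {μ : Measure α} {u v : α → ℝ} (hu : Integrable (fun x ↦ u x ^ 2) μ)
    (hv : Integrable (fun x ↦ v x ^ 2) μ) (huv : Integrable (fun x ↦ u x * v x) μ)
    (horth : ∫ x, u x * v x ∂μ = 0) :
    √(∫ x, (u x + v x) ^ 2 ∂μ) ≤ √(∫ x, u x ^ 2 ∂μ) + √(∫ x, v x ^ 2 ∂μ) := by
  have hpyth : ∫ x, (u x + v x) ^ 2 ∂μ = ∫ x, u x ^ 2 ∂μ + ∫ x, v x ^ 2 ∂μ := by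
    have hexp : (fun x ↦ (u x + v x) ^ 2) = fun x ↦ u x ^ 2 + (2 * (u x * v x) + v x ^ 2) := by
      ext x; ring
    have hrest : Integrable (fun x ↦ 2 * (u x * v x) + v x ^ 2) μ := (huv.const_mul 2).add hv
    rw [hexp, integral_add hu hrest, integral_add (huv.const_mul 2) hv,
      integral_const_mul, horth, mul_zero, zero_add]
  have ha : 0 ≤ ∫ x, u x ^ 2 ∂μ := integral_nonneg fun x ↦ sq_nonneg _
  have hb : 0 ≤ ∫ x, v x ^ 2 ∂μ := integral_nonneg fun x ↦ sq_nonneg _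
  rw [hpyth, Real.sqrt_le_iff]
  refine ⟨by positivity, ?_⟩
  nlinarith [Real.sq_sqrt ha, Real.sq_sqrt hb, Real.sqrt_nonneg (∫ x, u x ^ 2 ∂μ),
    Real.sqrt_nonneg (∫ x, v x ^ 2 ∂μ)]

theorem sqrt_setIntegral_sq_le_of_abs_le {α : Type*} [MeasurableSpace α] {μ : Measure α} {s : Set α}
    {h : α → ℝ} {M : ℝ} (hs : μ s < ⊤) (hM : 0 ≤ M) (hh : ∀ x ∈ s, |h x| ≤ M) :
    √(∫ x in s, h x ^ 2 ∂μ) ≤ √(μ.real s) * M := by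
  have hbound : ∫ x in s, h x ^ 2 ∂μ ≤ M ^ 2 * μ.real s := by
    refine (le_abs_self _).trans ?_
    rw [← Real.norm_eq_abs]
    refine norm_setIntegral_le_of_norm_le_const hs fun x hx ↦ ?_
    rw [Real.norm_eq_abs, abs_pow]
    exact pow_le_pow_left₀ (abs_nonneg _) (hh x hx) 2
  calc √(∫ x in s, h x ^ 2 ∂μ) ≤ √(M ^ 2 * μ.real s) := Real.sqrt_le_sqrt hbound
    _ = √(μ.real s) * M := by rw [Real.sqrt_mul (sq_nonneg M), Real.sqrt_sq hM, mul_comm]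

theorem abs_affineMap_le_of_convexOn {P : Set E} (hP : IsCompact P) {r R c : ℝ} (hr : 0 < r)
    (hrP : closedBall 0 (2 * r) ⊆ P) (hPR : P ⊆ closedBall 0 R) (hc₀ : 0 < c) (hc₁ : c ≤ 1)
    {f : E → ℝ} (hfc : ContinuousOn f P) (hf : ConvexOn ℝ P f) (hfnn : ∀ x ∈ P, 0 ≤ f x)
    (hf0 : f 0 = 0) (g : E →ᵃ[ℝ] ℝ) {x : E} (hx : x ∈ P) :
    |g x| ≤ (1 + R / r) *
      (√(∫ x in P, (f x - g x) ^ 2 ∂μ) / √(μ.real (closedBall (0 : E) r)) +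
        (c * (√(∫ x in P, f x ^ 2 ∂μ) / √(μ.real (closedBall (0 : E) (2 * r)))) +
          √(∫ x in P, (f x - g x) ^ 2 ∂μ) / √(μ.real (closedBall (0 : E) (c * (2 * r)))))) := by
  have h2r : 0 < 2 * r := by positivity
  have hlow : ∀ y ∈ closedBall (0 : E) r,
      -(√(∫ x in P, (f x - g x) ^ 2 ∂μ) / √(μ.real (closedBall (0 : E) r))) ≤ g y := by
    intro y hy
    have hB : closedBall y r ⊆ P :=
      (closedBall_subset_closedBall' (by rw [mem_closedBall] at hy; linarith)).trans hrP
    have havg : 0 ≤ ⨍ x in closedBall y r, f x ∂μ := by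
      rw [setAverage_eq]
      exact smul_nonneg (inv_nonneg.2 measureReal_nonneg)
        (setIntegral_nonneg measurableSet_closedBall fun x hx ↦ hfnn x (hB hx))
    linarith [(abs_le.1 (g.abs_setAverage_sub_le (μ := μ) hP hfc hr hB)).2]
  have hup : g 0 ≤ c * (√(∫ x in P, f x ^ 2 ∂μ) / √(μ.real (closedBall (0 : E) (2 * r)))) +
      √(∫ x in P, (f x - g x) ^ 2 ∂μ) / √(μ.real (closedBall (0 : E) (c * (2 * r)))) := by
    have hcB : closedBall (0 : E) (c * (2 * r)) ⊆ P :=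
      (closedBall_subset_closedBall (mul_le_of_le_one_left h2r.le hc₁)).trans hrP
    have hclose := (abs_le.1 (g.abs_setAverage_sub_le (μ := μ) hP hfc (mul_pos hc₀ h2r) hcB)).1
    have hscale := hf.setAverage_closedBall_mul_le (μ := μ) hfc hf0 h2r hrP hc₀ hc₁
    have hjensen := abs_setAverage_le_sqrt_integral_sq hrP (measure_closedBall_pos μ 0 h2r).ne'
      measure_closedBall_lt_top.ne ((hfc.mono hrP).integrableOn_compact (isCompact_closedBall _ _))
      ((hfc.pow 2).integrableOn_compact hP)
    linarith [mul_le_mul_of_nonneg_left ((le_abs_self _).trans hjensen) hc₀.le]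
  exact g.abs_le_of_forall_closedBall hr (by positivity) (by positivity) hlow hup
    (by simpa using hPR hx)

theorem exists_sqrt_integral_sq_le_mul_of_convexOn {P : Set E} (hP : IsCompact P)
    (hP0 : (0 : E) ∈ interior P) :
    ∃ C > 0, ∀ f : E → ℝ, ContinuousOn f P → ConvexOn ℝ P f → (∀ x ∈ P, 0 ≤ f x) → f 0 = 0 →
      ∀ g : E →ᵃ[ℝ] ℝ, ∫ x in P, (f x - g x) * g x ∂μ = 0 →
        √(∫ x in P, f x ^ 2 ∂μ) ≤ C * √(∫ x in P, (f x - g x) ^ 2 ∂μ) := by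
  obtain ⟨r, hr, hrP⟩ : ∃ r > 0, closedBall (0 : E) (2 * r) ⊆ P := by
    obtain ⟨ε, hε, hεP⟩ := nhds_basis_closedBall.mem_iff.1 (mem_interior_iff_mem_nhds.1 hP0)
    exact ⟨ε / 2, by positivity, by rwa [mul_div_cancel₀ _ two_ne_zero]⟩
  obtain ⟨R, hR, hPR⟩ := hP.isBounded.subset_closedBall_lt 0 0
  set v : ℝ → ℝ := fun ρ ↦ μ.real (closedBall (0 : E) ρ)
  have hv : ∀ ρ > 0, 0 < √(v ρ) := fun ρ hρ ↦ Real.sqrt_pos.2 (measureReal_closedBall_pos 0 hρ)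
  set κ := √(μ.real P) * (1 + R / r)
  have hκ : 0 ≤ κ := by positivity
  have hv2r := hv (2 * r) (by positivity)
  set c := √(v (2 * r)) / (2 * κ + √(v (2 * r)))
  have hc₀ : 0 < c := by positivity
  have hc₁ : c ≤ 1 := (div_le_one (by positivity)).2 (by linarith)
  have hκc : κ * (c / √(v (2 * r))) ≤ 1 / 2 := by
    rw [div_div_cancel_left' hv2r.ne', ← div_eq_mul_inv, div_le_iff₀ (by positivity)]
    linarith
  refine ⟨2 * (1 + κ / √(v r) + κ / √(v (c * (2 * r)))), by positivity, ?_⟩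
  intro f hfc hf hfnn hf0 g horth
  set D := √(∫ x in P, (f x - g x) ^ 2 ∂μ)
  set F := √(∫ x in P, f x ^ 2 ∂μ)
  have hgc : ContinuousOn g P := g.continuous_of_finiteDimensional.continuousOn
  have hgL2 : √(∫ x in P, g x ^ 2 ∂μ) ≤
      κ * (D / √(v r) + (c * (F / √(v (2 * r))) + D / √(v (c * (2 * r))))) := by
    rw [mul_assoc]
    exact sqrt_setIntegral_sq_le_of_abs_le hP.measure_lt_top (by positivity)
      fun x hx ↦ abs_affineMap_le_of_convexOn hP hr hrP hPR hc₀ hc₁ hfc hf hfnn hf0 g hx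
  have hpyth : F ≤ D + √(∫ x in P, g x ^ 2 ∂μ) := by
    simpa using sqrt_integral_sq_le_add_of_integral_mul_eq_zero
      (((hfc.sub hgc).pow 2).integrableOn_compact hP) ((hgc.pow 2).integrableOn_compact hP)
      (((hfc.sub hgc).mul hgc).integrableOn_compact hP) horth
  have habsorb : κ * (c * (F / √(v (2 * r)))) ≤ F / 2 := by
    rw [show κ * (c * (F / √(v (2 * r)))) = κ * (c / √(v (2 * r))) * F by ring]
    linarith [mul_le_mul_of_nonneg_right hκc (Real.sqrt_nonneg (∫ x in P, f x ^ 2 ∂μ))]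
  have hexpand : κ * (D / √(v r) + (c * (F / √(v (2 * r))) + D / √(v (c * (2 * r))))) =
      κ / √(v r) * D + κ * (c * (F / √(v (2 * r)))) + κ / √(v (c * (2 * r))) * D := by ring
  linarith

theorem normalised_convex_norm_inequality_general
    {n : ℕ} (P : Set (EuclideanSpace ℝ (Fin n)))
    (hPcomp : IsCompact P) (hP0 : (0 : EuclideanSpace ℝ (Fin n)) ∈ interior P) :
    ∃ C : ℝ, 0 < C ∧
      ∀ f : EuclideanSpace ℝ (Fin n) → ℝ,
        ContinuousOn f P → ConvexOn ℝ P f → (∀ x ∈ P, 0 ≤ f x) → f 0 = 0 →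
        ∀ g : EuclideanSpace ℝ (Fin n) →ᵃ[ℝ] ℝ,
          -- g is the L²(P)-orthogonal projection of f onto affine functions:
          (∀ a : EuclideanSpace ℝ (Fin n) →ᵃ[ℝ] ℝ,
            ∫ x in P, (f x - g x) * a x = 0) →
          Real.sqrt (∫ x in P, f x ^ 2) ≤
            C * Real.sqrt (∫ x in P, (f x - g x) ^ 2) := by
  obtain ⟨C, hC, hmain⟩ := exists_sqrt_integral_sq_le_mul_of_convexOn (μ := volume) hPcomp hP0
  exact ⟨C, hC, fun f hfc hf hfnn hf0 g horth ↦ hmain f hfc hf hfnn hf0 g (horth g)⟩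

theorem normalised_convex_norm_inequality
    {n : ℕ} (P : Set (EuclideanSpace ℝ (Fin n)))
    (hPcomp : IsCompact P) (hPconv : Convex ℝ P) (hP0 : (0 : EuclideanSpace ℝ (Fin n)) ∈ interior P) :
    ∃ C : ℝ, 0 < C ∧
      ∀ f : EuclideanSpace ℝ (Fin n) → ℝ,
        ContinuousOn f P → ConvexOn ℝ P f → (∀ x ∈ P, 0 ≤ f x) → f 0 = 0 →
        ∀ g : EuclideanSpace ℝ (Fin n) →ᵃ[ℝ] ℝ,
          -- g is the L²(P)-orthogonal projection of f onto affine functions: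
          (∀ a : EuclideanSpace ℝ (Fin n) →ᵃ[ℝ] ℝ,
            ∫ x in P, (f x - g x) * a x = 0) →
          Real.sqrt (∫ x in P, f x ^ 2) ≤
            C * Real.sqrt (∫ x in P, (f x - g x) ^ 2) :=
  normalised_convex_norm_inequality_general P hPcomp hP0
end

section
/- Let P ⊂ ℝⁿ be a compact convex polytope with 0 in its interior. If a sequence of normalised convex functions fₖ (continuous, convex, fₖ ≥ 0, fₖ(0)=0) converges to f uniformly on every compact subset of the interior of P, and ‖fₖ − Π(fₖ)‖_{L²(P)} ≤ C₁ for all k, then f ∈ L²(P) and ‖f − Π(f)‖_{L²(P)} ≤ lim inf ‖fₖ − Π(fₖ)‖_{L²(P)}. -/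
/-!
On a closed ball `B ⊆ int P` the `fₖ` are eventually uniformly bounded, so the affine functions
`gₖ` are bounded in `L²(B)`, which is a norm on the finite-dimensional space of affine functions.
Along a subsequence realising the lim inf, `gₖ → a` for some affine `a`, hence `fₖ - gₖ → f - a`
on `int P`, which has full measure in `P`. Fatou's lemma gives `f - a ∈ L²(P)` and
`‖f - a‖ ≤ lim inf ‖fₖ - gₖ‖`, and `‖f - g‖ ≤ ‖f - a‖` by Pythagoras, as `f - g ⊥ g - a`.
-/

open MeasureTheory Filter Topology Set
open scoped ENNReal NNReal

namespace MeasureTheory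

variable {α : Type*} [MeasurableSpace α] {μ : Measure α}

lemma MemLp.eLpNorm_two_eq_ofReal_sqrt_integral_sq {u : α → ℝ} (hu : MemLp u 2 μ) :
    eLpNorm u 2 μ = ENNReal.ofReal √(∫ x, u x ^ 2 ∂μ) := by
  rw [hu.eLpNorm_eq_integral_rpow_norm two_ne_zero ENNReal.ofNat_ne_top, Real.sqrt_eq_rpow]
  norm_num

lemma MemLp.sqrt_integral_sq_eq_toReal_eLpNorm {u : α → ℝ} (hu : MemLp u 2 μ) :
    √(∫ x, u x ^ 2 ∂μ) = (eLpNorm u 2 μ).toReal := by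
  rw [hu.eLpNorm_two_eq_ofReal_sqrt_integral_sq, ENNReal.toReal_ofReal (Real.sqrt_nonneg _)]

lemma memLp_two_and_sqrt_integral_sq_le_of_tendsto_ae {u : ℕ → α → ℝ} {v : α → ℝ} {L : ℝ}
    (hu : ∀ k, MemLp (u k) 2 μ) (hlim : ∀ᵐ x ∂μ, Tendsto (fun k => u k x) atTop (𝓝 (v x)))
    (hL : Tendsto (fun k => √(∫ x, u k x ^ 2 ∂μ)) atTop (𝓝 L)) :
    MemLp v 2 μ ∧ √(∫ x, v x ^ 2 ∂μ) ≤ L := by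
  have hfatou : eLpNorm v 2 μ ≤ ENNReal.ofReal L := by
    calc eLpNorm v 2 μ ≤ liminf (fun k => eLpNorm (u k) 2 μ) atTop :=
          Lp.eLpNorm_lim_le_liminf_eLpNorm (fun k => (hu k).1) v hlim
      _ = ENNReal.ofReal L := by
          simp_rw [fun k => (hu k).eLpNorm_two_eq_ofReal_sqrt_integral_sq]
          exact ((ENNReal.continuous_ofReal.tendsto L).comp hL).liminf_eq
  have hv : MemLp v 2 μ :=
    ⟨aestronglyMeasurable_of_tendsto_ae atTop (fun k => (hu k).1) hlim,
      hfatou.trans_lt ENNReal.ofReal_lt_top⟩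
  refine ⟨hv, ?_⟩
  rw [hv.sqrt_integral_sq_eq_toReal_eLpNorm]
  have hL0 : 0 ≤ L := ge_of_tendsto' hL fun k => Real.sqrt_nonneg _
  simpa [ENNReal.toReal_ofReal hL0] using ENNReal.toReal_mono ENNReal.ofReal_ne_top hfatou

lemma integral_sq_le_integral_add_sq_of_integral_mul_eq_zero {u v : α → ℝ} (hu : MemLp u 2 μ)
    (hv : MemLp v 2 μ) (huv : ∫ x, u x * v x ∂μ = 0) :
    ∫ x, u x ^ 2 ∂μ ≤ ∫ x, (u x + v x) ^ 2 ∂μ := by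
  have huv_int : Integrable (fun x => u x * v x) μ := hu.integrable_mul hv
  have hexpand : ∫ x, (u x + v x) ^ 2 ∂μ =
      ∫ x, u x ^ 2 ∂μ + 2 * ∫ x, u x * v x ∂μ + ∫ x, v x ^ 2 ∂μ := by
    simp_rw [add_sq, mul_assoc]
    rw [integral_add (f := fun x => u x ^ 2 + 2 * (u x * v x))
        (hu.integrable_sq.add (huv_int.const_mul 2)) hv.integrable_sq,
      integral_add hu.integrable_sq (huv_int.const_mul 2), integral_const_mul]
  rw [hexpand, huv]
  have hv2 : 0 ≤ ∫ x, v x ^ 2 ∂μ := integral_nonneg fun x => sq_nonneg (v x)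
  linarith

end MeasureTheory

lemma ContinuousOn.memLp_two_of_isCompact {X : Type*} [TopologicalSpace X] [MeasurableSpace X]
    [OpensMeasurableSpace X] [T2Space X] {μ : Measure X} [IsFiniteMeasureOnCompacts μ] {s : Set X}
    {u : X → ℝ} (hu : ContinuousOn u s) (hs : IsCompact s) : MemLp u 2 (μ.restrict s) := by
  rw [memLp_two_iff_integrable_sq (hu.aestronglyMeasurable hs.measurableSet)]
  exact (hu.pow 2).integrableOn_compact hs

lemma Convex.ae_restrict_mem_interior {E : Type*} [NormedAddCommGroup E] [NormedSpace ℝ E]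
    [MeasurableSpace E] [BorelSpace E] [FiniteDimensional ℝ E] {μ : Measure E}
    [μ.IsAddHaarMeasure] {s : Set E} (hs : Convex ℝ s) : ∀ᵐ x ∂μ.restrict s, x ∈ interior s := by
  filter_upwards [ae_restrict_mem₀ (hs.nullMeasurableSet (μ := μ)),
    ae_restrict_of_ae (measure_eq_zero_iff_ae_notMem.1 (hs.addHaar_frontier μ))] with x hxs hxf
  by_contra hxi
  exact hxf ⟨subset_closure hxs, hxi⟩

lemma TendstoUniformlyOn.exists_eventually_abs_le {ι X : Type*} [TopologicalSpace X]
    {l : Filter ι} [l.NeBot] {F : ι → X → ℝ} {f : X → ℝ} {s : Set X}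
    (h : TendstoUniformlyOn F f l s) (hs : IsCompact s) (hF : ∀ i, ContinuousOn (F i) s) :
    ∃ M, ∀ᶠ i in l, ∀ x ∈ s, |F i x| ≤ M := by
  obtain ⟨M, hM⟩ := hs.exists_bound_of_continuousOn (h.continuousOn (Frequently.of_forall hF))
  refine ⟨M + 1, ?_⟩
  filter_upwards [Metric.tendstoUniformlyOn_iff.1 h 1 one_pos] with i hi x hx
  have := abs_sub_abs_le_abs_sub (F i x) (f x)
  rw [abs_sub_comm, ← Real.dist_eq] at this
  linarith [hi x hx, hM x hx, Real.norm_eq_abs (f x)]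

lemma exists_subseq_tendsto_liminf_and_tendsto {X : Type*} [SeminormedAddCommGroup X]
    [ProperSpace X] {a : ℕ → ℝ} {x : ℕ → X} (ha : IsBoundedUnder (· ≤ ·) atTop a)
    (ha' : IsBoundedUnder (· ≥ ·) atTop a) (hx : IsBoundedUnder (· ≤ ·) atTop fun k => ‖x k‖) :
    ∃ θ : ℕ → ℕ, Tendsto θ atTop atTop ∧ Tendsto (a ∘ θ) atTop (𝓝 (liminf a atTop)) ∧
      ∃ y, Tendsto (x ∘ θ) atTop (𝓝 y) := by
  obtain ⟨φ, hφa, hφ⟩ := exists_seq_tendsto_liminf ha.isCoboundedUnder_ge ha'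
  obtain ⟨R, hR⟩ := hx.eventually_le
  have hxφ : ∃ᶠ j in atTop, (x ∘ φ) j ∈ Metric.closedBall 0 R :=
    (hφ.eventually hR).frequently.mono fun j hj => by simpa using hj
  obtain ⟨y, -, ψ, hψ, hy⟩ := tendsto_subseq_of_frequently_bounded Metric.isBounded_closedBall hxφ
  exact ⟨φ ∘ ψ, hφ.comp hψ.tendsto_atTop, hφa.comp hψ.tendsto_atTop, y, hy⟩

section AffineFunctions

variable {E : Type*} [NormedAddCommGroup E] [NormedSpace ℝ E] [FiniteDimensional ℝ E]

/-- Coordinates `(linear part, value at 0)`, through which affine functions inherit a norm. -/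
noncomputable def affineMapEquivProd : ((E →L[ℝ] ℝ) × ℝ) ≃ₗ[ℝ] (E →ᵃ[ℝ] ℝ) :=
  (LinearEquiv.prodCongr LinearMap.toContinuousLinearMap.symm (LinearEquiv.refl ℝ ℝ) ≪≫ₗ
    LinearEquiv.prodComm ℝ _ _) ≪≫ₗ (AffineMap.toConstProdLinearMap ℝ).symm

lemma coe_affineMapEquivProd (p : (E →L[ℝ] ℝ) × ℝ) :
    ⇑(affineMapEquivProd p) = fun x => p.1 x + p.2 := by
  ext; simp [affineMapEquivProd]

@[simp]
lemma affineMapEquivProd_apply (p : (E →L[ℝ] ℝ) × ℝ) (x : E) :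
    affineMapEquivProd p x = p.1 x + p.2 := by
  rw [coe_affineMapEquivProd]

lemma continuous_affineMapEquivProd_apply (x : E) :
    Continuous fun p : (E →L[ℝ] ℝ) × ℝ => affineMapEquivProd p x := by
  simp only [affineMapEquivProd_apply]; fun_prop

lemma affineMapEquivProd_eq_zero_of_eqOn {p : (E →L[ℝ] ℝ) × ℝ} {U : Set E} (hU : IsOpen U)
    (hne : U.Nonempty) (h : EqOn (affineMapEquivProd p) 0 U) : p = 0 := by
  obtain ⟨x₀, hx₀⟩ := hne
  have hderiv : HasFDerivAt (affineMapEquivProd p) p.1 x₀ := by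
    rw [coe_affineMapEquivProd]; exact p.1.hasFDerivAt.add_const p.2
  have hlin : p.1 = 0 := by
    rw [← hderiv.fderiv, (eventuallyEq_of_mem (hU.mem_nhds hx₀) h).fderiv_eq]
    simp
  have hconst : p.2 = 0 := by simpa [hlin] using h hx₀
  exact Prod.ext hlin hconst

variable [MeasurableSpace E] [BorelSpace E] (μ : Measure E) [IsFiniteMeasureOnCompacts μ]

lemma memLp_affineMapEquivProd {s : Set E} (hs : IsCompact s) (p : (E →L[ℝ] ℝ) × ℝ) :
    MemLp (affineMapEquivProd p) 2 (μ.restrict s) :=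
  (affineMapEquivProd p).continuous_of_finiteDimensional.continuousOn.memLp_two_of_isCompact hs

noncomputable def affineMapEquivProdToLp {s : Set E} (hs : IsCompact s) :
    ((E →L[ℝ] ℝ) × ℝ) →ₗ[ℝ] Lp ℝ 2 (μ.restrict s) where
  toFun p := (memLp_affineMapEquivProd μ hs p).toLp
  map_add' p q := by
    simp_rw [map_add, AffineMap.coe_add]
    exact MemLp.toLp_add _ _
  map_smul' c p := by
    simp_rw [map_smul, AffineMap.coe_smul]
    exact MemLp.toLp_const_smul _ _

lemma exists_norm_le_mul_eLpNorm_affineMapEquivProd [μ.IsOpenPosMeasure] {s : Set E}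
    (hs : IsCompact s) (hs' : (interior s).Nonempty) :
    ∃ K : ℝ≥0, ∀ p, ‖p‖ ≤ K * (eLpNorm (affineMapEquivProd p) 2 (μ.restrict s)).toReal := by
  have hker : LinearMap.ker (affineMapEquivProdToLp μ hs) = ⊥ := by
    refine LinearMap.ker_eq_bot'.2 fun p hp => ?_
    have hp' : (memLp_affineMapEquivProd μ hs p).toLp = 0 := hp
    have hae : affineMapEquivProd p =ᵐ[μ.restrict (interior s)] 0 :=
      ae_restrict_of_ae_restrict_of_subset interior_subset
        ((MemLp.coeFn_toLp _).symm.trans (Lp.eq_zero_iff_ae_eq_zero.1 hp'))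
    exact affineMapEquivProd_eq_zero_of_eqOn isOpen_interior hs'
      (Measure.eqOn_open_of_ae_eq hae isOpen_interior
        (affineMapEquivProd p).continuous_of_finiteDimensional.continuousOn continuousOn_const)
  obtain ⟨K, -, hK⟩ := LinearMap.exists_antilipschitzWith _ hker
  exact ⟨K, fun p => (ZeroHomClass.bound_of_antilipschitz _ hK p).trans_eq (by
    rw [affineMapEquivProdToLp, LinearMap.coe_mk, AddHom.coe_mk, Lp.norm_toLp])⟩

lemma isBoundedUnder_norm_of_eLpNorm_sub_affineMapEquivProd_le [μ.IsOpenPosMeasure]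
    {s : Set E} (hs : IsCompact s) (hs' : (interior s).Nonempty) {u : ℕ → E → ℝ}
    {p : ℕ → (E →L[ℝ] ℝ) × ℝ} {M C : ℝ} (hu : ∀ k, AEStronglyMeasurable (u k) (μ.restrict s))
    (hM : ∀ᶠ k in atTop, ∀ x ∈ s, |u k x| ≤ M)
    (hC : ∀ k, eLpNorm (u k - ⇑(affineMapEquivProd (p k))) 2 (μ.restrict s) ≤ ENNReal.ofReal C) :
    IsBoundedUnder (· ≤ ·) atTop fun k => ‖p k‖ := by
  obtain ⟨K, hK⟩ := exists_norm_le_mul_eLpNorm_affineMapEquivProd μ hs hs'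
  set R : ℝ≥0∞ := μ s ^ (2 : ℝ≥0∞).toReal⁻¹ * ENNReal.ofReal M + ENNReal.ofReal C
  have hR : R ≠ ∞ := ENNReal.add_ne_top.2 ⟨ENNReal.mul_ne_top
    (ENNReal.rpow_ne_top_of_nonneg (by positivity) hs.measure_lt_top.ne) ENNReal.ofReal_ne_top,
    ENNReal.ofReal_ne_top⟩
  refine isBoundedUnder_of_eventually_le (a := K * R.toReal) ?_
  filter_upwards [hM] with k hk
  have hsplit : ⇑(affineMapEquivProd (p k)) = u k - (u k - affineMapEquivProd (p k)) :=
    (sub_sub_cancel _ _).symm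
  have hbound : eLpNorm (affineMapEquivProd (p k)) 2 (μ.restrict s) ≤ R := by
    rw [hsplit]
    refine (eLpNorm_sub_le (hu k) ((hu k).sub (memLp_affineMapEquivProd μ hs _).1)
      one_le_two).trans (add_le_add ?_ (hC k))
    refine (eLpNorm_le_of_ae_bound ((ae_restrict_iff' hs.measurableSet).2
      (Eventually.of_forall hk))).trans_eq ?_
    rw [Measure.restrict_apply_univ]
  calc ‖p k‖ ≤ K * (eLpNorm (affineMapEquivProd (p k)) 2 (μ.restrict s)).toReal := hK _
    _ ≤ K * R.toReal := by gcongr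

end AffineFunctions

theorem seminorm_lsc_under_locally_uniform_convergence_general
    {n : ℕ} (P : Set (EuclideanSpace ℝ (Fin n)))
    (hPcomp : IsCompact P) (hPconv : Convex ℝ P)
    (hP0 : (0 : EuclideanSpace ℝ (Fin n)) ∈ interior P)
    (f : EuclideanSpace ℝ (Fin n) → ℝ)
    (fk : ℕ → EuclideanSpace ℝ (Fin n) → ℝ)
    (hfkc : ∀ k, ContinuousOn (fk k) P)
    (hconv : ∀ K : Set (EuclideanSpace ℝ (Fin n)), K ⊆ interior P → IsCompact K →
      TendstoUniformlyOn fk f atTop K)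
    (gk : ℕ → EuclideanSpace ℝ (Fin n) →ᵃ[ℝ] ℝ)
    (C₁ : ℝ)
    (hbd : ∀ k, Real.sqrt (∫ x in P, (fk k x - gk k x) ^ 2) ≤ C₁) :
    IntegrableOn (fun x => f x ^ 2) P volume ∧
      ∀ g : EuclideanSpace ℝ (Fin n) →ᵃ[ℝ] ℝ,
        (∀ a : EuclideanSpace ℝ (Fin n) →ᵃ[ℝ] ℝ,
          ∫ x in P, (f x - g x) * a x = 0) →
        Real.sqrt (∫ x in P, (f x - g x) ^ 2) ≤
          liminf (fun k => Real.sqrt (∫ x in P, (fk k x - gk k x) ^ 2)) atTop := by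
  have hmem_affine (a : EuclideanSpace ℝ (Fin n) →ᵃ[ℝ] ℝ) : MemLp a 2 (volume.restrict P) :=
    a.continuous_of_finiteDimensional.continuousOn.memLp_two_of_isCompact hPcomp
  have hmem k : MemLp (fun x => fk k x - gk k x) 2 (volume.restrict P) :=
    ((hfkc k).memLp_two_of_isCompact hPcomp).sub (hmem_affine (gk k))
  obtain ⟨r, hr, hB⟩ := Metric.nhds_basis_closedBall.mem_iff.1 (isOpen_interior.mem_nhds hP0)
  have hBP := hB.trans interior_subset
  have hBcomp := isCompact_closedBall (0 : EuclideanSpace ℝ (Fin n)) r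
  obtain ⟨M, hM⟩ := (hconv _ hB hBcomp).exists_eventually_abs_le hBcomp fun k => (hfkc k).mono hBP
  have hbdd : IsBoundedUnder (· ≤ ·) atTop fun k => ‖affineMapEquivProd.symm (gk k)‖ :=
    isBoundedUnder_norm_of_eLpNorm_sub_affineMapEquivProd_le volume hBcomp
      ⟨0, mem_interior_iff_mem_nhds.2 (Metric.closedBall_mem_nhds 0 hr)⟩
      (fun k => ((hfkc k).mono hBP).aestronglyMeasurable measurableSet_closedBall) hM fun k => by
        rw [LinearEquiv.apply_symm_apply]
        calc _ ≤ eLpNorm (fun x => fk k x - gk k x) 2 (volume.restrict P) :=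
              eLpNorm_mono_measure _ (Measure.restrict_mono hBP le_rfl)
          _ ≤ ENNReal.ofReal C₁ := by
              rw [(hmem k).eLpNorm_two_eq_ofReal_sqrt_integral_sq]
              exact ENNReal.ofReal_le_ofReal (hbd k)
  obtain ⟨θ, hθ, hL, p, hp⟩ := exists_subseq_tendsto_liminf_and_tendsto
    (isBoundedUnder_of ⟨C₁, hbd⟩) (isBoundedUnder_of ⟨0, fun k => Real.sqrt_nonneg _⟩) hbdd
  have hlim : ∀ᵐ x ∂volume.restrict P, Tendsto (fun j => fk (θ j) x - gk (θ j) x) atTop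
      (𝓝 (f x - affineMapEquivProd p x)) := by
    filter_upwards [hPconv.ae_restrict_mem_interior] with x hx
    have hf := ((hconv {x} (singleton_subset_iff.2 hx) isCompact_singleton).tendsto_at rfl).comp hθ
    have hg := ((continuous_affineMapEquivProd_apply x).tendsto p).comp hp
    simpa only [Function.comp_def, LinearEquiv.apply_symm_apply] using hf.sub hg
  obtain ⟨hfp, hle⟩ := memLp_two_and_sqrt_integral_sq_le_of_tendsto_ae (fun j => hmem (θ j)) hlim hL
  have hf : MemLp f 2 (volume.restrict P) := by
    convert hfp.add (hmem_affine (affineMapEquivProd p)) using 1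
    ext x; simp
  refine ⟨hf.integrable_sq, fun g hg => le_trans (Real.sqrt_le_sqrt ?_) hle⟩
  simpa only [Pi.sub_apply, sub_add_sub_cancel] using
    integral_sq_le_integral_add_sq_of_integral_mul_eq_zero (hf.sub (hmem_affine g))
      ((hmem_affine g).sub (hmem_affine _)) (hg (g - affineMapEquivProd p))

theorem seminorm_lsc_under_locally_uniform_convergence
    {n : ℕ} (P : Set (EuclideanSpace ℝ (Fin n)))
    (hPcomp : IsCompact P) (hPconv : Convex ℝ P)
    (hP0 : (0 : EuclideanSpace ℝ (Fin n)) ∈ interior P)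
    (f : EuclideanSpace ℝ (Fin n) → ℝ)
    (fk : ℕ → EuclideanSpace ℝ (Fin n) → ℝ)
    (hfkc : ∀ k, ContinuousOn (fk k) P)
    (hfkconv : ∀ k, ConvexOn ℝ P (fk k))
    (hfknn : ∀ k, ∀ x ∈ P, 0 ≤ fk k x)
    (hfk0 : ∀ k, fk k 0 = 0)
    (hconv : ∀ K : Set (EuclideanSpace ℝ (Fin n)), K ⊆ interior P → IsCompact K →
      TendstoUniformlyOn fk f atTop K)
    (gk : ℕ → EuclideanSpace ℝ (Fin n) →ᵃ[ℝ] ℝ)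
    -- gk k is the L²(P)-orthogonal projection of fk k onto affine functions:
    (hgk : ∀ k, ∀ a : EuclideanSpace ℝ (Fin n) →ᵃ[ℝ] ℝ,
      ∫ x in P, (fk k x - gk k x) * a x = 0)
    (C₁ : ℝ)
    (hbd : ∀ k, Real.sqrt (∫ x in P, (fk k x - gk k x) ^ 2) ≤ C₁) :
    IntegrableOn (fun x => f x ^ 2) P volume ∧
      ∀ g : EuclideanSpace ℝ (Fin n) →ᵃ[ℝ] ℝ,
        (∀ a : EuclideanSpace ℝ (Fin n) →ᵃ[ℝ] ℝ,
          ∫ x in P, (f x - g x) * a x = 0) →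
        Real.sqrt (∫ x in P, (f x - g x) ^ 2) ≤
          liminf (fun k => Real.sqrt (∫ x in P, (fk k x - gk k x) ^ 2)) atTop :=
  seminorm_lsc_under_locally_uniform_convergence_general P hPcomp hPconv hP0 f fk hfkc hconv gk C₁
    hbd
end
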